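/- The Lindenstrauss sequence L = (l_j)_{j≥1} in ℓ₁, given by l_j = e_j − (1/2)(e_{2j} + e_{2j+1}), is an almost greedy basic sequence in ℓ₁ (i.e., an almost greedy Schauder basis of its closed linear span) satisfying: (a) L_m[L] ≈ log m for m ≥ 2; (b) the spaces ℓ₁^d[L] (the closed span of l_1,…,l_d with the ℓ₁ norm) are uniformly isomorphic to ℓ₁^d, i.e., there is a constant C such that for every d ∈ ℕ there is an isomorphism T_d : ℓ₁^d[L] → ℓ₁^d with ‖T_d‖ ‖T_d^{-1}‖ ≤ C; and (c) φ_m[L] ≈ m for m ∈ ℕ. -/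

import Mathlib

open Filter
open scoped ENNReal NNReal

noncomputable section

section BasisDefs

variable {X : Type*} [NormedAddCommGroup X] [NormedSpace ℝ X]

/-- `a` is the coefficient sequence of a norm-convergent expansion of `f` along `x`. -/
def ExpandsTo (x : ℕ → X) (a : ℕ → ℝ) (f : X) : Prop :=
  Tendsto (fun N => ∑ j ∈ Finset.range N, a j • x j) atTop (nhds f)

/-- A Schauder basis of `X`: every vector admits a unique norm-convergent expansion. -/
def IsSchauderBasis (x : ℕ → X) : Prop :=
  ∀ f : X, ∃! a : ℕ → ℝ, ExpandsTo x a f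

open Classical in
/-- The `j`-th coordinate functional associated with the sequence `x`. -/
def coordFn (x : ℕ → X) (j : ℕ) (f : X) : ℝ :=
  if h : ∃ a : ℕ → ℝ, ExpandsTo x a f then h.choose j else 0

/-- The coordinate projection onto a finite set `A` of indices. -/
def coordProj (x : ℕ → X) (A : Finset ℕ) (f : X) : X :=
  ∑ j ∈ A, coordFn x j f • x j

/-- The `m`-th w-conditionality constant `L_m[x]`. -/
def Lconst (x : ℕ → X) (m : ℕ) : ℝ :=
  sSup {r : ℝ | ∃ f ∈ Submodule.span ℝ (x '' Set.Iio m), f ≠ 0 ∧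
    ∃ A : Finset ℕ, r = ‖coordProj x A f‖ / ‖f‖}

/-- A semi-normalized sequence. -/
def SemiNormalized (x : ℕ → X) : Prop :=
  (∃ c > 0, ∀ j, c ≤ ‖x j‖) ∧ (∃ b, ∀ j, ‖x j‖ ≤ b)

/-- `A` is a greedy set for `f`: no coefficient outside `A` dominates one inside `A`. -/
def GreedySet (x : ℕ → X) (f : X) (A : Finset ℕ) : Prop :=
  ∀ j ∉ A, ∀ k ∈ A, |coordFn x j f| ≤ |coordFn x k f|

/-- A quasi-greedy (Schauder) basis. -/
def QuasiGreedyBasis (x : ℕ → X) : Prop :=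
  IsSchauderBasis x ∧ SemiNormalized x ∧
    ∃ C : ℝ, ∀ (f : X) (A : Finset ℕ), GreedySet x f A →
      ‖f - coordProj x A f‖ ≤ C * ‖f‖

/-- An almost greedy (Schauder) basis. -/
def AlmostGreedyBasis (x : ℕ → X) : Prop :=
  IsSchauderBasis x ∧
    ∃ C : ℝ, ∀ (f : X) (A B : Finset ℕ), B.card ≤ A.card → GreedySet x f A →
      ‖f - coordProj x A f‖ ≤ C * ‖f - coordProj x B f‖

/-- The fundamental function `φ_m[x]`. -/
def fundFun (x : ℕ → X) (m : ℕ) : ℝ :=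
  sSup {r : ℝ | ∃ A : Finset ℕ, A.card ≤ m ∧ r = ‖∑ j ∈ A, x j‖}

/-- A democratic basis. -/
def Democratic (x : ℕ → X) : Prop :=
  ∃ C : ℝ, ∀ (m : ℕ) (A : Finset ℕ), m ≤ A.card → fundFun x m ≤ C * ‖∑ j ∈ A, x j‖

/-- A basis of type P: bounded partial sums and norms of the vectors bounded below. -/
def TypeP (x : ℕ → X) : Prop :=
  (∃ b, ∀ k : ℕ, ‖∑ j ∈ Finset.range k, x j‖ ≤ b) ∧ (∃ c > 0, ∀ j, c ≤ ‖x j‖)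

/-- The closed linear span of the first `d` vectors of `x`. -/
def spanC (x : ℕ → X) (d : ℕ) : Submodule ℝ X :=
  (Submodule.span ℝ (x '' Set.Iio d)).topologicalClosure

end BasisDefs

/-- `Y` is isomorphic to a complemented subspace of `X`. -/
def ComplementedCopy (Y X : Type*) [NormedAddCommGroup Y] [NormedSpace ℝ Y]
    [NormedAddCommGroup X] [NormedSpace ℝ X] : Prop :=
  ∃ (L : Y →L[ℝ] X) (R : X →L[ℝ] Y), ∀ f, R (L f) = f

/-- `Y` is isomorphic to a closed subspace of `X`. -/
def SubspaceCopy (Y X : Type*) [NormedAddCommGroup Y] [NormedSpace ℝ Y]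
    [NormedAddCommGroup X] [NormedSpace ℝ X] : Prop :=
  ∃ (T : Y →L[ℝ] X) (c : ℝ), 0 < c ∧ ∀ f, c * ‖f‖ ≤ ‖T f‖

/-- The Lindenstrauss vectors `l_j = e_j - (1/2)(e_{2j} + e_{2j+1})` (here `j = k+1`,
written with 0-based indices) in `ℓ₁`. -/
def lindVec (k : ℕ) : lp (fun _ : ℕ => ℝ) 1 :=
  lp.single 1 k 1 -
    (1 / 2 : ℝ) • (lp.single 1 (2 * k + 1) 1 + lp.single 1 (2 * k + 2) 1)

/-- The closed linear span of the Lindenstrauss sequence in `ℓ₁`. -/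
def lindSpan : Submodule ℝ (lp (fun _ : ℕ => ℝ) 1) :=
  (Submodule.span ℝ (Set.range lindVec)).topologicalClosure

/-- The Lindenstrauss sequence, viewed inside its closed linear span. -/
def lindSeq (k : ℕ) : ↥lindSpan :=
  ⟨lindVec k, Submodule.le_topologicalClosure _ (Submodule.subset_span ⟨k, rfl⟩)⟩

namespace Lind

abbrev X₁ := lp (fun _ : ℕ => ℝ) 1

lemma norm1 (f : X₁) : ‖f‖ = ∑' n, |f n| := by
  have := lp.norm_eq_tsum_rpow (p := 1) (by norm_num) f
  simpa [Real.norm_eq_abs] using this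

lemma summ (f : X₁) : Summable (fun n => |f n|) := by
  have := lp.hasSum_norm (p := 1) (by norm_num) f
  simp only [ENNReal.toReal_one, Real.rpow_one] at this
  exact this.summable.congr (by intro n; simp [Real.norm_eq_abs])

lemma apply_le_norm (f : X₁) (n : ℕ) : |f n| ≤ ‖f‖ := by
  simpa [Real.norm_eq_abs] using lp.norm_apply_le_norm (by norm_num) f n

/-- parent in the binary tree -/
def par (n : ℕ) : ℕ := (n - 1) / 2

lemma par_lt {n : ℕ} (h : n ≠ 0) : par n < n := by
  unfold par; omega

lemma single_apply (i : ℕ) (c : ℝ) (j : ℕ) :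
    (lp.single 1 i c : X₁) j = if j = i then c else 0 := by
  rw [lp.single_apply, Pi.single_apply]

lemma lindVec_apply (k n : ℕ) :
    (lindVec k : ∀ _ : ℕ, ℝ) n =
      (if n = k then (1:ℝ) else 0)
        - (1/2) * ((if n = 2*k+1 then (1:ℝ) else 0) + (if n = 2*k+2 then (1:ℝ) else 0)) := by
  have h1 : ((lindVec k : X₁) : ∀ _ : ℕ, ℝ) n
      = (lp.single 1 k (1:ℝ) : X₁) n - (1/2 : ℝ) * ((lp.single 1 (2*k+1) (1:ℝ) : X₁) n
          + (lp.single 1 (2*k+2) (1:ℝ) : X₁) n) := by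
    rw [lindVec, lp.coeFn_sub, lp.coeFn_smul, lp.coeFn_add]
    simp only [Pi.sub_apply, Pi.smul_apply, Pi.add_apply, smul_eq_mul]
  rw [h1, single_apply, single_apply, single_apply]

lemma norm_lindVec_le (k : ℕ) : ‖lindVec k‖ ≤ 2 := by
  have hs : ∀ (i : ℕ) (c : ℝ), ‖(lp.single 1 i c : X₁)‖ = |c| := by
    intro i c
    rw [norm1]
    rw [tsum_eq_sum (s := {i}) (by intro b hb; rw [single_apply]; simp at hb; simp [hb])]
    simp [single_apply]
  have h1 : ‖lindVec k‖ ≤ ‖(lp.single 1 k (1:ℝ) : X₁)‖ + ‖(1/2 : ℝ) • (lp.single 1 (2*k+1) (1:ℝ)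
        + lp.single 1 (2*k+2) (1:ℝ) : X₁)‖ := norm_sub_le _ _
  have h2 : ‖(1/2 : ℝ) • (lp.single 1 (2*k+1) (1:ℝ) + lp.single 1 (2*k+2) (1:ℝ) : X₁)‖
      = (1/2) * ‖(lp.single 1 (2*k+1) (1:ℝ) + lp.single 1 (2*k+2) (1:ℝ) : X₁)‖ := by
    rw [norm_smul]; norm_num
  have h3 : ‖(lp.single 1 (2*k+1) (1:ℝ) + lp.single 1 (2*k+2) (1:ℝ) : X₁)‖
      ≤ ‖(lp.single 1 (2*k+1) (1:ℝ) : X₁)‖ + ‖(lp.single 1 (2*k+2) (1:ℝ) : X₁)‖ := norm_add_le _ _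
  rw [hs, h2] at h1
  rw [hs, hs] at h3
  norm_num at h1 h3 ⊢
  linarith

/-- The coefficient functionals. -/
def lam (f : ∀ _ : ℕ, ℝ) : ℕ → ℝ
  | 0 => f 0
  | (n+1) => f (n+1) + (1/2) * lam f (n/2)
decreasing_by exact Nat.lt_succ_of_le (Nat.div_le_self n 2)

lemma lam_eq (f : ∀ _ : ℕ, ℝ) (n : ℕ) :
    lam f n = f n + (if n = 0 then 0 else (1/2) * lam f (par n)) := by
  cases n with
  | zero => simp [lam]
  | succ m => simp [lam, par]

end Lind

namespace Lind

lemma lam_zero_fn (n : ℕ) : lam (fun _ => (0:ℝ)) n = 0 := by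
  induction n using Nat.strong_induction_on with
  | _ n ih =>
    rw [lam_eq]
    rcases Nat.eq_zero_or_pos n with h | h
    · simp [h]
    · have := ih (par n) (par_lt (by omega))
      simp [Nat.pos_iff_ne_zero.mp h, this]

lemma lam_add (f g : ∀ _ : ℕ, ℝ) (n : ℕ) :
    lam (fun i => f i + g i) n = lam f n + lam g n := by
  induction n using Nat.strong_induction_on with
  | _ n ih =>
    rw [lam_eq, lam_eq f, lam_eq g]
    rcases Nat.eq_zero_or_pos n with h | h
    · simp [h]
    · have := ih (par n) (par_lt (by omega))
      simp [Nat.pos_iff_ne_zero.mp h, this]; ring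

lemma lam_smul (c : ℝ) (f : ∀ _ : ℕ, ℝ) (n : ℕ) :
    lam (fun i => c * f i) n = c * lam f n := by
  induction n using Nat.strong_induction_on with
  | _ n ih =>
    rw [lam_eq, lam_eq f]
    rcases Nat.eq_zero_or_pos n with h | h
    · simp [h]
    · have := ih (par n) (par_lt (by omega))
      simp [Nat.pos_iff_ne_zero.mp h, this]; ring

lemma lam_sub (f g : ∀ _ : ℕ, ℝ) (n : ℕ) :
    lam (fun i => f i - g i) n = lam f n - lam g n := by
  have h1 : lam (fun i => f i - g i) n + lam g n = lam f n := by
    rw [← lam_add]; congr 1; funext i; ring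
  linarith

lemma lam_bound (f : X₁) (n : ℕ) : |lam (⇑f) n| ≤ 2 * ‖f‖ := by
  induction n using Nat.strong_induction_on with
  | _ n ih =>
    rw [lam_eq]
    rcases Nat.eq_zero_or_pos n with h | h
    · have := apply_le_norm f 0
      have hn : (0:ℝ) ≤ ‖f‖ := norm_nonneg f
      simp [h]; linarith
    · have hp := ih (par n) (par_lt (by omega))
      have h1 := apply_le_norm f n
      rw [if_neg (by omega)]
      calc |f n + 1/2 * lam (⇑f) (par n)| ≤ |f n| + (1/2) * |lam (⇑f) (par n)| := by
            refine (abs_add_le _ _).trans ?_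
            rw [abs_mul]
            have : |(1:ℝ)/2| = 1/2 := by norm_num
            rw [this]
        _ ≤ ‖f‖ + (1/2) * (2 * ‖f‖) := by
            have : (0:ℝ) < 1/2 := by norm_num
            nlinarith
        _ = 2 * ‖f‖ := by ring

lemma lam_lindVec (k n : ℕ) :
    lam (⇑(lindVec k)) n = if n = k then 1 else 0 := by
  induction n using Nat.strong_induction_on with
  | _ n ih =>
    rw [lam_eq, lindVec_apply]
    rcases Nat.eq_zero_or_pos n with h | h
    · subst h
      have h1 : ¬ (0 = 2*k+1) := by omega
      have h2 : ¬ (0 = 2*k+2) := by omega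
      simp [h1, h2]
    · have hn0 : n ≠ 0 := by omega
      rw [if_neg hn0, ih (par n) (par_lt hn0)]
      by_cases hk : n = k
      · subst hk
        have h1 : ¬ (n = 2*n+1) := by omega
        have h2 : ¬ (n = 2*n+2) := by omega
        have h3 : par n ≠ n := by have := par_lt hn0; omega
        simp [h1, h2, h3]
      · by_cases hpar : par n = k
        · have hch : n = 2*k+1 ∨ n = 2*k+2 := by unfold par at hpar; omega
          rw [if_neg hk, if_pos hpar]
          rcases hch with h | h
          · have h2 : ¬ (n = 2*k+2) := by omega
            simp [h, h2]
          · have h2 : ¬ (n = 2*k+1) := by omega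
            simp [h, h2]
        · have h1 : ¬ (n = 2*k+1) := by unfold par at hpar; omega
          have h2 : ¬ (n = 2*k+2) := by unfold par at hpar; omega
          simp [hk, h1, h2, hpar]

lemma coe_sum_apply {ι : Type*} (s : Finset ι) (v : ι → X₁) (n : ℕ) :
    (↑(∑ k ∈ s, v k) : ∀ _ : ℕ, ℝ) n = ∑ k ∈ s, (↑(v k) : ∀ _ : ℕ, ℝ) n := by
  classical
  induction s using Finset.cons_induction with
  | empty => simp [lp.coeFn_zero]
  | cons a s ha ih =>
    rw [Finset.sum_cons, Finset.sum_cons, ← ih, lp.coeFn_add]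
    rfl

lemma lam_sum {ι : Type*} (s : Finset ι) (v : ι → X₁) (n : ℕ) :
    lam (⇑(∑ k ∈ s, v k)) n = ∑ k ∈ s, lam (⇑(v k)) n := by
  classical
  induction s using Finset.cons_induction with
  | empty =>
    rw [Finset.sum_empty, Finset.sum_empty]
    have : ⇑(0 : X₁) = (fun _ => (0:ℝ)) := by ext i; simp [lp.coeFn_zero]
    rw [this, lam_zero_fn]
  | cons a s ha ih =>
    rw [Finset.sum_cons, Finset.sum_cons, ← ih]
    have : ⇑(v a + ∑ k ∈ s, v k) = fun i => (v a) i + (∑ k ∈ s, v k) i := by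
      ext i; simp [lp.coeFn_add]
    rw [this, lam_add]

lemma lam_single_smul (c : ℝ) (w : X₁) (n : ℕ) : lam (⇑(c • w)) n = c * lam (⇑w) n := by
  have : ⇑(c • w) = fun i => c * w i := by ext i; simp [lp.coeFn_smul]
  rw [this, lam_smul]

lemma lam_comb (a : ℕ → ℝ) (A : Finset ℕ) (n : ℕ) :
    lam (⇑(∑ k ∈ A, a k • lindVec k)) n = if n ∈ A then a n else 0 := by
  rw [lam_sum]
  have : ∀ k ∈ A, lam (⇑(a k • lindVec k)) n = if n = k then a k else 0 := by
    intro k _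
    rw [lam_single_smul, lam_lindVec]
    by_cases h : n = k <;> simp [h]
  rw [Finset.sum_congr rfl this, Finset.sum_ite_eq A n a]

end Lind

namespace Lind

lemma coord_sum (a : ℕ → ℝ) (A : Finset ℕ) (n : ℕ) :
    (↑(∑ k ∈ A, a k • lindVec k) : ∀ _ : ℕ, ℝ) n
      = (if n ∈ A then a n else 0)
        - (1/2) * (if n ≠ 0 ∧ par n ∈ A then a (par n) else 0) := by
  classical
  rw [coe_sum_apply]
  have hterm : ∀ k ∈ A, (↑(a k • lindVec k) : ∀ _ : ℕ, ℝ) n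
      = (if n = k then a k else 0)
        - (1/2) * ((if n = 2*k+1 then a k else 0) + (if n = 2*k+2 then a k else 0)) := by
    intro k _
    have : (↑(a k • lindVec k) : ∀ _ : ℕ, ℝ) n = a k * (↑(lindVec k) : ∀ _ : ℕ, ℝ) n := by
      simp [lp.coeFn_smul]
    rw [this, lindVec_apply]
    split_ifs <;> ring
  rw [Finset.sum_congr rfl hterm]
  rw [Finset.sum_sub_distrib, ← Finset.mul_sum, Finset.sum_add_distrib]
  rw [Finset.sum_ite_eq A n a]
  congr 1
  congr 1
  by_cases h0 : n = 0
  · subst h0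
    have h1 : ∀ k, ¬ ((0:ℕ) = 2*k+1) := by omega
    have h2 : ∀ k, ¬ ((0:ℕ) = 2*k+2) := by omega
    simp [h1, h2]
  · by_cases hp : n % 2 = 1
    · have e1 : ∀ k ∈ A, (if n = 2*k+1 then a k else 0) = (if k = par n then a (par n) else 0) := by
        intro k _
        have : (n = 2*k+1) ↔ (k = par n) := by unfold par; omega
        by_cases h : k = par n
        · rw [if_pos h, if_pos (this.mpr h)]; rw [h]
        · rw [if_neg h, if_neg (fun hh => h (this.mp hh))]
      have e2 : ∀ k ∈ A, (if n = 2*k+2 then a k else 0) = 0 := by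
        intro k _
        rw [if_neg (by omega)]
      rw [Finset.sum_congr rfl e1, Finset.sum_congr rfl e2]
      rw [Finset.sum_ite_eq' A (par n) (fun _ => a (par n))]
      simp [h0]
    · have hp2 : n % 2 = 0 := by omega
      have e1 : ∀ k ∈ A, (if n = 2*k+1 then a k else 0) = 0 := by
        intro k _
        rw [if_neg (by omega)]
      have e2 : ∀ k ∈ A, (if n = 2*k+2 then a k else 0) = (if k = par n then a (par n) else 0) := by
        intro k _
        have : (n = 2*k+2) ↔ (k = par n) := by unfold par; omega
        by_cases h : k = par n
        · rw [if_pos h, if_pos (this.mpr h)]; rw [h]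
        · rw [if_neg h, if_neg (fun hh => h (this.mp hh))]
      rw [Finset.sum_congr rfl e1, Finset.sum_congr rfl e2]
      rw [Finset.sum_ite_eq' A (par n) (fun _ => a (par n))]
      simp [h0]

/-- membership of coordinates: finite combinations have finite support -/
lemma coord_sum_support (a : ℕ → ℝ) (A : Finset ℕ) (N : ℕ)
    (hA : ∀ k ∈ A, k < N) (n : ℕ) (hn : 2*N + 1 ≤ n) :
    (↑(∑ k ∈ A, a k • lindVec k) : ∀ _ : ℕ, ℝ) n = 0 := by
  rw [coord_sum]
  have h1 : n ∉ A := fun h => by have := hA n h; omega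
  have h2 : ¬ (n ≠ 0 ∧ par n ∈ A) := by
    rintro ⟨hn0, hp⟩
    have := hA (par n) hp
    unfold par at this; omega
  rw [if_neg h1, if_neg h2]; ring

/-- norm of a finite combination via finite sum of coordinates -/
lemma norm_comb_eq (a : ℕ → ℝ) (A : Finset ℕ) (N : ℕ) (hA : ∀ k ∈ A, k < N) :
    ‖∑ k ∈ A, a k • lindVec k‖
      = ∑ n ∈ Finset.range (2*N+1), |(↑(∑ k ∈ A, a k • lindVec k) : ∀ _ : ℕ, ℝ) n| := by
  rw [norm1]
  refine tsum_eq_sum ?_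
  intro b hb
  rw [Finset.mem_range, not_lt] at hb
  rw [coord_sum_support a A N hA b (by omega)]
  simp

lemma norm_comb_le (a : ℕ → ℝ) (A : Finset ℕ) :
    ‖∑ k ∈ A, a k • lindVec k‖ ≤ 2 * ∑ k ∈ A, |a k| := by
  calc ‖∑ k ∈ A, a k • lindVec k‖ ≤ ∑ k ∈ A, ‖a k • lindVec k‖ := norm_sum_le _ _
    _ ≤ ∑ k ∈ A, |a k| * 2 := by
        refine Finset.sum_le_sum ?_
        intro k _
        rw [norm_smul, Real.norm_eq_abs]
        exact mul_le_mul_of_nonneg_left (norm_lindVec_le k) (abs_nonneg _)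
    _ = 2 * ∑ k ∈ A, |a k| := by rw [← Finset.sum_mul]; ring

end Lind

namespace Lind

lemma par_c1 (m : ℕ) : par (2*m+1) = m := by unfold par; omega
lemma par_c2 (m : ℕ) : par (2*m+2) = m := by unfold par; omega

lemma par_children (m n : ℕ) (hn : n ≠ 0) : (par n = m) ↔ (n = 2*m+1 ∨ n = 2*m+2) := by
  unfold par; omega

/-- fibration over parents -/
lemma sum_parent (S : Finset ℕ) (hS : (0:ℕ) ∉ S) (g : ℕ → ℝ) :
    ∑ n ∈ S, g (par n)
      = ∑ m ∈ S.image par,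
          (((if 2*m+1 ∈ S then (1:ℝ) else 0) + (if 2*m+2 ∈ S then (1:ℝ) else 0)) * g m) := by
  classical
  rw [Finset.sum_comp g par]
  refine Finset.sum_congr rfl ?_
  intro m _
  have hfib : S.filter (fun n => par n = m) = S.filter (fun n => n = 2*m+1 ∨ n = 2*m+2) := by
    refine Finset.filter_congr ?_
    intro n hn
    have hn0 : n ≠ 0 := fun h => hS (h ▸ hn)
    simp [par_children m n hn0]
  have hcard : (S.filter (fun n => par n = m)).card
      = (if 2*m+1 ∈ S then 1 else 0) + (if 2*m+2 ∈ S then 1 else 0) := by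
    rw [hfib, Finset.filter_or, Finset.card_union_of_disjoint]
    · rw [Finset.filter_eq', Finset.filter_eq']
      by_cases h1 : 2*m+1 ∈ S <;> by_cases h2 : 2*m+2 ∈ S <;> simp [h1, h2]
    · rw [Finset.disjoint_left]
      intro x hx1 hx2
      simp at hx1 hx2
      omega
  rw [hcard, nsmul_eq_mul]
  push_cast
  by_cases h1 : 2*m+1 ∈ S <;> by_cases h2 : 2*m+2 ∈ S <;> simp [h1, h2]

/-- number of children inside `D` (real valued) -/
def kappa (D : Finset ℕ) (m : ℕ) : ℝ :=
  (if 2*m+1 ∈ D then (1:ℝ) else 0) + (if 2*m+2 ∈ D then (1:ℝ) else 0)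

lemma kappa_nonneg (D : Finset ℕ) (m : ℕ) : 0 ≤ kappa D m := by
  unfold kappa; split_ifs <;> norm_num

lemma kappa_le_two (D : Finset ℕ) (m : ℕ) : kappa D m ≤ 2 := by
  unfold kappa; split_ifs <;> norm_num

def Ein (D : Finset ℕ) : Finset ℕ := (D.erase 0).filter (fun n => par n ∈ D)
def Rout (D : Finset ℕ) : Finset ℕ := (D.erase 0).filter (fun n => par n ∉ D)

lemma mem_Ein {D : Finset ℕ} {n : ℕ} : n ∈ Ein D ↔ n ≠ 0 ∧ n ∈ D ∧ par n ∈ D := by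
  simp [Ein, Finset.mem_filter, Finset.mem_erase]; tauto

lemma mem_Rout {D : Finset ℕ} {n : ℕ} : n ∈ Rout D ↔ n ≠ 0 ∧ n ∈ D ∧ par n ∉ D := by
  simp [Rout, Finset.mem_filter, Finset.mem_erase]; tauto

lemma sum_par_in (D : Finset ℕ) (g : ℕ → ℝ) :
    ∑ n ∈ Ein D, g (par n) = ∑ m ∈ D, kappa D m * g m := by
  classical
  have h0 : (0:ℕ) ∉ Ein D := fun h => by simp [mem_Ein] at h
  rw [sum_parent _ h0]
  have himg : (Ein D).image par ⊆ D := by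
    intro m hm
    rw [Finset.mem_image] at hm
    obtain ⟨n, hn, rfl⟩ := hm
    exact (mem_Ein.mp hn).2.2
  have step1 : ∀ m ∈ (Ein D).image par,
      ((if 2*m+1 ∈ Ein D then (1:ℝ) else 0) + (if 2*m+2 ∈ Ein D then (1:ℝ) else 0)) * g m
        = kappa D m * g m := by
    intro m hm
    have hmD : m ∈ D := himg hm
    have e1 : (2*m+1 ∈ Ein D) ↔ (2*m+1 ∈ D) := by
      rw [mem_Ein, par_c1]
      constructor
      · tauto
      · intro h; exact ⟨by omega, h, hmD⟩
    have e2 : (2*m+2 ∈ Ein D) ↔ (2*m+2 ∈ D) := by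
      rw [mem_Ein, par_c2]
      constructor
      · tauto
      · intro h; exact ⟨by omega, h, hmD⟩
    unfold kappa
    rw [if_congr e1 rfl rfl, if_congr e2 rfl rfl]
  rw [Finset.sum_congr rfl step1]
  refine Finset.sum_subset himg ?_
  intro m hmD hmI
  have c1 : 2*m+1 ∉ D := by
    intro hc
    exact hmI (Finset.mem_image.mpr ⟨2*m+1, mem_Ein.mpr ⟨by omega, hc, by rw [par_c1]; exact hmD⟩, par_c1 m⟩)
  have c2 : 2*m+2 ∉ D := by
    intro hc
    exact hmI (Finset.mem_image.mpr ⟨2*m+2, mem_Ein.mpr ⟨by omega, hc, by rw [par_c2]; exact hmD⟩, par_c2 m⟩)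
  unfold kappa
  rw [if_neg c1, if_neg c2]
  ring

def Cout (D : Finset ℕ) : Finset ℕ :=
  ((D.image (fun m => 2*m+1)) ∪ (D.image (fun m => 2*m+2))).filter (fun n => n ∉ D)

lemma mem_Cout {D : Finset ℕ} {n : ℕ} : n ∈ Cout D ↔ n ∉ D ∧ n ≠ 0 ∧ par n ∈ D := by
  classical
  simp only [Cout, Finset.mem_filter, Finset.mem_union, Finset.mem_image]
  constructor
  · rintro ⟨(⟨m, hm, rfl⟩ | ⟨m, hm, rfl⟩), hnD⟩
    · exact ⟨hnD, by omega, by rw [par_c1]; exact hm⟩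
    · exact ⟨hnD, by omega, by rw [par_c2]; exact hm⟩
  · rintro ⟨hnD, hn0, hp⟩
    refine ⟨?_, hnD⟩
    rcases (par_children (par n) n hn0).mp rfl with h | h
    · left; exact ⟨par n, hp, h.symm⟩
    · right; exact ⟨par n, hp, h.symm⟩

lemma sum_par_out (D : Finset ℕ) (g : ℕ → ℝ) :
    ∑ n ∈ Cout D, g (par n) = ∑ m ∈ D, (2 - kappa D m) * g m := by
  classical
  have h0 : (0:ℕ) ∉ Cout D := fun h => by simp [mem_Cout] at h
  rw [sum_parent _ h0]
  have himg : (Cout D).image par ⊆ D := by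
    intro m hm
    rw [Finset.mem_image] at hm
    obtain ⟨n, hn, rfl⟩ := hm
    exact (mem_Cout.mp hn).2.2
  have step1 : ∀ m ∈ (Cout D).image par,
      ((if 2*m+1 ∈ Cout D then (1:ℝ) else 0) + (if 2*m+2 ∈ Cout D then (1:ℝ) else 0)) * g m
        = (2 - kappa D m) * g m := by
    intro m hm
    have hmD : m ∈ D := himg hm
    have e1 : (2*m+1 ∈ Cout D) ↔ ¬ (2*m+1 ∈ D) := by
      rw [mem_Cout, par_c1]
      constructor
      · tauto
      · intro h; exact ⟨h, by omega, hmD⟩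
    have e2 : (2*m+2 ∈ Cout D) ↔ ¬ (2*m+2 ∈ D) := by
      rw [mem_Cout, par_c2]
      constructor
      · tauto
      · intro h; exact ⟨h, by omega, hmD⟩
    unfold kappa
    rw [if_congr e1 rfl rfl, if_congr e2 rfl rfl]
    split_ifs <;> first | ring | tauto
  rw [Finset.sum_congr rfl step1]
  refine Finset.sum_subset himg ?_
  intro m hmD hmI
  have c1 : 2*m+1 ∈ D := by
    by_contra hc
    exact hmI (Finset.mem_image.mpr ⟨2*m+1, mem_Cout.mpr ⟨hc, by omega, by rw [par_c1]; exact hmD⟩, par_c1 m⟩)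
  have c2 : 2*m+2 ∈ D := by
    by_contra hc
    exact hmI (Finset.mem_image.mpr ⟨2*m+2, mem_Cout.mpr ⟨hc, by omega, by rw [par_c2]; exact hmD⟩, par_c2 m⟩)
  unfold kappa
  rw [if_pos c1, if_pos c2]
  ring

end Lind

namespace Lind

lemma sum_erase0 (D : Finset ℕ) (h : ℕ → ℝ) :
    ∑ n ∈ D.erase 0, h n = ∑ n ∈ D, if n = 0 then 0 else h n := by
  classical
  rw [← Finset.filter_ne' D 0, Finset.sum_filter]
  refine Finset.sum_congr rfl ?_
  intro n _
  by_cases h0 : n = 0 <;> simp [h0]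

lemma core_G1 (f : ∀ _ : ℕ, ℝ) (D : Finset ℕ) :
    ∑ n ∈ D, |lam f n|
      ≤ ∑ n ∈ D, |f n| + (1/2) * ∑ n ∈ D.erase 0, |lam f (par n)| := by
  have hpt : ∀ n, |lam f n| ≤ |f n| + (1/2) * (if n = 0 then 0 else |lam f (par n)|) := by
    intro n
    rw [lam_eq]
    by_cases h0 : n = 0
    · simp [h0]
    · rw [if_neg h0, if_neg h0]
      refine (abs_add_le _ _).trans ?_
      rw [abs_mul]
      have : |(1:ℝ)/2| = 1/2 := by norm_num
      rw [this]
  calc ∑ n ∈ D, |lam f n|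
      ≤ ∑ n ∈ D, (|f n| + (1/2) * (if n = 0 then 0 else |lam f (par n)|)) :=
        Finset.sum_le_sum (fun n _ => hpt n)
    _ = ∑ n ∈ D, |f n| + (1/2) * ∑ n ∈ D, (if n = 0 then 0 else |lam f (par n)|) := by
        rw [Finset.sum_add_distrib, Finset.mul_sum]
    _ = _ := by rw [sum_erase0]

lemma erase_split (D : Finset ℕ) (h : ℕ → ℝ) :
    ∑ n ∈ D.erase 0, h n = ∑ n ∈ Ein D, h n + ∑ n ∈ Rout D, h n := by
  classical
  exact (Finset.sum_filter_add_sum_filter_not (D.erase 0) (fun n => par n ∈ D) h).symm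

/-- The global inequality (no greedy hypotheses). -/
lemma core1 (f : ∀ _ : ℕ, ℝ) (D : Finset ℕ) :
    ∑ m ∈ D, (2 - kappa D m) * |lam f m|
      ≤ 2 * ∑ n ∈ D, |f n| + ∑ n ∈ Rout D, |lam f (par n)| := by
  have h1 := core_G1 f D
  rw [erase_split D (fun n => |lam f (par n)|), sum_par_in D (fun m => |lam f m|)] at h1
  have expand : ∑ m ∈ D, (2 - kappa D m) * |lam f m|
      = 2 * ∑ m ∈ D, |lam f m| - ∑ m ∈ D, kappa D m * |lam f m| := by
    rw [Finset.mul_sum, ← Finset.sum_sub_distrib]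
    refine Finset.sum_congr rfl (fun m _ => by ring)
  rw [expand]
  linarith

lemma kappa_card (D : Finset ℕ) : ∑ m ∈ D, kappa D m = ((Ein D).card : ℝ) := by
  have := sum_par_in D (fun _ => (1:ℝ))
  simp only [mul_one] at this
  rw [← this]
  simp

lemma card_split (D : Finset ℕ) : (Ein D).card + (Rout D).card ≤ D.card := by
  classical
  have h := Finset.card_filter_add_card_filter_not
    (s := D.erase 0) (p := fun n => par n ∈ D)
  have h2 : (D.erase 0).card ≤ D.card := Finset.card_le_card (Finset.erase_subset _ _)
  unfold Ein Rout
  omega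

lemma sum_two_sub_kappa (D : Finset ℕ) :
    (D.card : ℝ) + ((Rout D).card : ℝ) ≤ ∑ m ∈ D, (2 - kappa D m) := by
  have h1 : ∑ m ∈ D, (2 - kappa D m) = 2 * D.card - (Ein D).card := by
    rw [Finset.sum_sub_distrib, kappa_card]
    simp [mul_comm]
  rw [h1]
  have := card_split D
  have h2 : ((Ein D).card : ℝ) + ((Rout D).card : ℝ) ≤ (D.card : ℝ) := by
    exact_mod_cast this
  linarith

lemma Rout_card_le (D : Finset ℕ) : ((Rout D).card : ℝ) ≤ (D.card : ℝ) := by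
  have := card_split D
  exact_mod_cast by omega

/-- Lemma T : threshold times cardinality. -/
lemma core_ii (f : ∀ _ : ℕ, ℝ) (D : Finset ℕ) (t : ℝ)
    (h1 : ∀ n ∈ D, t ≤ |lam f n|) (h2 : ∀ n, n ∉ D → |lam f n| ≤ t) :
    t * D.card ≤ 2 * ∑ n ∈ D, |f n| := by
  have hF : 0 ≤ ∑ n ∈ D, |f n| := Finset.sum_nonneg (fun n _ => abs_nonneg _)
  rcases le_or_gt t 0 with ht | ht
  · have : t * D.card ≤ 0 := mul_nonpos_of_nonpos_of_nonneg ht (Nat.cast_nonneg _)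
    linarith
  · have hc := core1 f D
    have hlow : t * (D.card : ℝ) + t * ((Rout D).card : ℝ) ≤ ∑ m ∈ D, (2 - kappa D m) * |lam f m| := by
      calc t * (D.card : ℝ) + t * ((Rout D).card : ℝ) ≤ t * ∑ m ∈ D, (2 - kappa D m) := by
            rw [← mul_add]
            exact mul_le_mul_of_nonneg_left (sum_two_sub_kappa D) ht.le
        _ = ∑ m ∈ D, t * (2 - kappa D m) := Finset.mul_sum _ _ _
        _ ≤ ∑ m ∈ D, (2 - kappa D m) * |lam f m| := by
            refine Finset.sum_le_sum ?_
            intro m hm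
            have hk : 0 ≤ 2 - kappa D m := by linarith [kappa_le_two D m]
            have := h1 m hm
            calc t * (2 - kappa D m) = (2 - kappa D m) * t := by ring
              _ ≤ (2 - kappa D m) * |lam f m| := mul_le_mul_of_nonneg_left this hk
    have hR : ∑ n ∈ Rout D, |lam f (par n)| ≤ t * (Rout D).card := by
      calc ∑ n ∈ Rout D, |lam f (par n)| ≤ ∑ n ∈ Rout D, t := by
            refine Finset.sum_le_sum ?_
            intro n hn
            exact h2 (par n) (mem_Rout.mp hn).2.2
        _ = t * (Rout D).card := by rw [Finset.sum_const, nsmul_eq_mul]; ring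
    linarith [hlow.trans hc, hR]

/-- Lemma Q : the boundary sum bound. -/
lemma core_i (f : ∀ _ : ℕ, ℝ) (D : Finset ℕ) (t : ℝ)
    (h1 : ∀ n ∈ D, t ≤ |lam f n|) (h2 : ∀ n, n ∉ D → |lam f n| ≤ t) :
    ∑ m ∈ D, (2 - kappa D m) * |lam f m| ≤ 4 * ∑ n ∈ D, |f n| := by
  have hF : 0 ≤ ∑ n ∈ D, |f n| := Finset.sum_nonneg (fun n _ => abs_nonneg _)
  have ht : 0 ≤ t := by
    obtain ⟨n, hn⟩ := Finset.exists_notMem D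
    exact (abs_nonneg _).trans (h2 n hn)
  have hc := core1 f D
  have hR : ∑ n ∈ Rout D, |lam f (par n)| ≤ t * (Rout D).card := by
    calc ∑ n ∈ Rout D, |lam f (par n)| ≤ ∑ n ∈ Rout D, t :=
          Finset.sum_le_sum (fun n hn => h2 (par n) (mem_Rout.mp hn).2.2)
      _ = t * (Rout D).card := by rw [Finset.sum_const, nsmul_eq_mul]; ring
  have hlow : t * (D.card : ℝ) + t * ((Rout D).card : ℝ) ≤ ∑ m ∈ D, (2 - kappa D m) * |lam f m| := by
    calc t * (D.card : ℝ) + t * ((Rout D).card : ℝ) ≤ t * ∑ m ∈ D, (2 - kappa D m) := by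
          rw [← mul_add]
          exact mul_le_mul_of_nonneg_left (sum_two_sub_kappa D) ht
      _ = ∑ m ∈ D, t * (2 - kappa D m) := Finset.mul_sum _ _ _
      _ ≤ ∑ m ∈ D, (2 - kappa D m) * |lam f m| := by
          refine Finset.sum_le_sum ?_
          intro m hm
          have hk : 0 ≤ 2 - kappa D m := by linarith [kappa_le_two D m]
          calc t * (2 - kappa D m) = (2 - kappa D m) * t := by ring
            _ ≤ (2 - kappa D m) * |lam f m| := mul_le_mul_of_nonneg_left (h1 m hm) hk
  have h2t : 2 * (t * (Rout D).card) ≤ ∑ m ∈ D, (2 - kappa D m) * |lam f m| := by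
    have : t * (Rout D).card ≤ t * (D.card : ℝ) :=
      mul_le_mul_of_nonneg_left (Rout_card_le D) ht
    linarith
  linarith

end Lind

namespace Lind

lemma summable_ite (S : Finset ℕ) (w : ℕ → ℝ) :
    Summable (fun n => if n ∈ S then w n else 0) := by
  refine summable_of_ne_finset_zero (s := S) ?_
  intro b hb
  rw [if_neg hb]

lemma norm_le_of_coord_bound (g : X₁) (c : ℝ) (f : X₁) (S : Finset ℕ) (w : ℕ → ℝ)
    (hpt : ∀ n, |g n| ≤ c * |f n| + (if n ∈ S then w n else 0)) :
    ‖g‖ ≤ c * ‖f‖ + ∑ n ∈ S, w n := by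
  rw [norm1 g, norm1 f]
  have hsum : Summable (fun n => c * |f n| + (if n ∈ S then w n else 0)) :=
    ((summ f).mul_left c).add (summable_ite S w)
  calc ∑' n, |g n| ≤ ∑' n, (c * |f n| + (if n ∈ S then w n else 0)) :=
        Summable.tsum_le_tsum hpt (summ g) hsum
    _ = (∑' n, c * |f n|) + ∑' n, (if n ∈ S then w n else 0) :=
        Summable.tsum_add ((summ f).mul_left c) (summable_ite S w)
    _ = c * (∑' n, |f n|) + ∑ n ∈ S, w n := by
        rw [tsum_mul_left, tsum_eq_sum (s := S) (fun b hb => if_neg hb)]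
        refine congrArg _ (Finset.sum_congr rfl ?_)
        intro n hn
        rw [if_pos hn]

lemma lam_parent_eq (f : ∀ _ : ℕ, ℝ) {n : ℕ} (hn : n ≠ 0) :
    lam f n - (1/2) * lam f (par n) = f n := by
  rw [lam_eq, if_neg hn]; ring

lemma lam_abs_le (f : ∀ _ : ℕ, ℝ) {n : ℕ} (hn : n ≠ 0) :
    |lam f n| ≤ |f n| + (1/2) * |lam f (par n)| := by
  rw [lam_eq, if_neg hn]
  refine (abs_add_le _ _).trans ?_
  rw [abs_mul]
  have : |(1:ℝ)/2| = 1/2 := by norm_num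
  rw [this]

lemma lam_zero_eq (f : ∀ _ : ℕ, ℝ) : lam f 0 = f 0 := by
  rw [lam_eq]; simp

/-- quasi-greedy type bound -/
lemma proj_norm_le (f : X₁) (D : Finset ℕ) (t : ℝ)
    (h1 : ∀ n ∈ D, t ≤ |lam (⇑f) n|) (h2 : ∀ n, n ∉ D → |lam (⇑f) n| ≤ t) :
    ‖∑ k ∈ D, lam (⇑f) k • lindVec k‖ ≤ 4 * ‖f‖ := by
  classical
  set g := ∑ k ∈ D, lam (⇑f) k • lindVec k with hg
  have hpt : ∀ n, |(g : ∀ _ : ℕ, ℝ) n|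
      ≤ 2 * |f n| + (if n ∈ Cout D then (1/2) * |lam (⇑f) (par n)| else 0) := by
    intro n
    rw [hg, coord_sum]
    by_cases hnD : n ∈ D
    · have hnC : n ∉ Cout D := fun h => (mem_Cout.mp h).1 hnD
      rw [if_pos hnD, if_neg hnC]
      by_cases hn0 : n = 0
      · subst hn0
        rw [if_neg (by simp)]
        rw [lam_zero_eq]
        have : |f 0| ≤ 2 * |f 0| := by nlinarith [abs_nonneg (f 0)]
        simpa using this
      · by_cases hpD : par n ∈ D
        · rw [if_pos ⟨hn0, hpD⟩, lam_parent_eq _ hn0]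
          nlinarith [abs_nonneg (f n)]
        · rw [if_neg (fun h => hpD h.2)]
          have e1 : |lam (⇑f) n| ≤ |f n| + (1/2) * |lam (⇑f) (par n)| := lam_abs_le _ hn0
          have e2 : |lam (⇑f) (par n)| ≤ t := h2 (par n) hpD
          have e3 : t ≤ |lam (⇑f) n| := h1 n hnD
          have : |lam (⇑f) n| ≤ 2 * |f n| := by linarith
          simpa using this
    · rw [if_neg hnD]
      by_cases hc : n ≠ 0 ∧ par n ∈ D
      · have hnC : n ∈ Cout D := mem_Cout.mpr ⟨hnD, hc.1, hc.2⟩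
        rw [if_pos hc, if_pos hnC]
        rw [abs_sub_comm, sub_zero, abs_mul]
        have : |(1:ℝ)/2| = 1/2 := by norm_num
        rw [this]
        nlinarith [abs_nonneg (f n)]
      · rw [if_neg hc, if_neg (fun h => hc ⟨(mem_Cout.mp h).2.1, (mem_Cout.mp h).2.2⟩)]
        simp [abs_nonneg (f n)]
  have hmain := norm_le_of_coord_bound g 2 f (Cout D) (fun n => (1/2) * |lam (⇑f) (par n)|) hpt
  have hout : ∑ n ∈ Cout D, (1/2) * |lam (⇑f) (par n)|
      = (1/2) * ∑ m ∈ D, (2 - kappa D m) * |lam (⇑f) m| := by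
    rw [← Finset.mul_sum, sum_par_out D (fun m => |lam (⇑f) m|)]
  have hcore := core_i (⇑f) D t h1 h2
  have hDf : ∑ n ∈ D, |f n| ≤ ‖f‖ := by
    rw [norm1]
    exact Summable.sum_le_tsum D (fun n _ => abs_nonneg _) (summ f)
  rw [hout] at hmain
  have : (1/2) * ∑ m ∈ D, (2 - kappa D m) * |lam (⇑f) m| ≤ 2 * ‖f‖ := by
    have h4 : (4:ℝ) * ∑ n ∈ D, |f n| ≤ 4 * ‖f‖ := by linarith
    linarith
  linarith

lemma Rout_range (N : ℕ) : Rout (Finset.range N) = ∅ := by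
  classical
  rw [Finset.eq_empty_iff_forall_notMem]
  intro n hn
  rw [mem_Rout] at hn
  obtain ⟨h0, hmem, hpar⟩ := hn
  rw [Finset.mem_range] at hmem
  exact hpar (Finset.mem_range.mpr ((par_lt h0).trans_le (by omega)))

/-- basis constant bound -/
lemma basis_bound (f : X₁) (N : ℕ) :
    ‖∑ k ∈ Finset.range N, lam (⇑f) k • lindVec k‖ ≤ 2 * ‖f‖ := by
  classical
  set D := Finset.range N with hD
  set g := ∑ k ∈ D, lam (⇑f) k • lindVec k with hg
  have hpt : ∀ n, |(g : ∀ _ : ℕ, ℝ) n|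
      ≤ 1 * |f n| + (if n ∈ Cout D then (1/2) * |lam (⇑f) (par n)| else 0) := by
    intro n
    rw [hg, coord_sum]
    by_cases hnD : n ∈ D
    · have hnC : n ∉ Cout D := fun h => (mem_Cout.mp h).1 hnD
      rw [if_pos hnD, if_neg hnC]
      by_cases hn0 : n = 0
      · subst hn0
        rw [if_neg (by simp), lam_zero_eq]
        simp
      · have hpD : par n ∈ D := by
          rw [hD, Finset.mem_range] at hnD ⊢
          exact (par_lt hn0).trans hnD
        rw [if_pos ⟨hn0, hpD⟩, lam_parent_eq _ hn0]
        simp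
    · rw [if_neg hnD]
      by_cases hc : n ≠ 0 ∧ par n ∈ D
      · have hnC : n ∈ Cout D := mem_Cout.mpr ⟨hnD, hc.1, hc.2⟩
        rw [if_pos hc, if_pos hnC]
        rw [abs_sub_comm, sub_zero, abs_mul]
        have : |(1:ℝ)/2| = 1/2 := by norm_num
        rw [this]
        nlinarith [abs_nonneg (f n)]
      · rw [if_neg hc, if_neg (fun h => hc ⟨(mem_Cout.mp h).2.1, (mem_Cout.mp h).2.2⟩)]
        simp [abs_nonneg (f n)]
  have hmain := norm_le_of_coord_bound g 1 f (Cout D) (fun n => (1/2) * |lam (⇑f) (par n)|) hpt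
  have hout : ∑ n ∈ Cout D, (1/2) * |lam (⇑f) (par n)|
      = (1/2) * ∑ m ∈ D, (2 - kappa D m) * |lam (⇑f) m| := by
    rw [← Finset.mul_sum, sum_par_out D (fun m => |lam (⇑f) m|)]
  have hcore := core1 (⇑f) D
  rw [Rout_range] at hcore
  simp only [Finset.sum_empty, add_zero] at hcore
  have hDf : ∑ n ∈ D, |f n| ≤ ‖f‖ := by
    rw [norm1]
    exact Summable.sum_le_tsum D (fun n _ => abs_nonneg _) (summ f)
  rw [hout] at hmain
  linarith

end Lind

namespace Lind

lemma lam_sub' (x y : X₁) (n : ℕ) : lam (⇑(x - y)) n = lam (⇑x) n - lam (⇑y) n := by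
  have : ⇑(x - y) = fun i => x i - y i := by
    ext i; simp [lp.coeFn_sub]
  rw [this, lam_sub]

lemma lam_lip (x y : X₁) (n : ℕ) : |lam (⇑x) n - lam (⇑y) n| ≤ 2 * ‖x - y‖ := by
  rw [← lam_sub']
  exact lam_bound (x - y) n

lemma comb_mem_span (a : ℕ → ℝ) (A : Finset ℕ) :
    ∑ k ∈ A, a k • lindVec k ∈ Submodule.span ℝ (Set.range lindVec) :=
  Submodule.sum_mem _ (fun k _ => Submodule.smul_mem _ _ (Submodule.subset_span ⟨k, rfl⟩))

lemma comb_mem (a : ℕ → ℝ) (A : Finset ℕ) : ∑ k ∈ A, a k • lindVec k ∈ lindSpan :=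
  Submodule.le_topologicalClosure _ (comb_mem_span a A)

lemma lindSeq_val (k : ℕ) : ((lindSeq k : ↥lindSpan) : X₁) = lindVec k := rfl

lemma partial_val (a : ℕ → ℝ) (A : Finset ℕ) :
    ((∑ j ∈ A, a j • lindSeq j : ↥lindSpan) : X₁) = ∑ j ∈ A, a j • lindVec j := by
  rw [Submodule.coe_sum]
  exact Finset.sum_congr rfl (fun j _ => rfl)

lemma tendsto_val {u : ℕ → ↥lindSpan} {f : ↥lindSpan} :
    Tendsto u atTop (nhds f) ↔ Tendsto (fun N => (u N : X₁)) atTop (nhds (f : X₁)) := by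
  constructor
  · intro h
    exact (continuous_subtype_val.tendsto _).comp h
  · intro h
    rw [Topology.IsEmbedding.subtypeVal.tendsto_nhds_iff]
    exact h

/-- the projection onto coordinates `< N`, as a map on `X₁` -/
def PN (N : ℕ) (x : X₁) : X₁ := ∑ k ∈ Finset.range N, lam (⇑x) k • lindVec k

lemma PN_sub (N : ℕ) (x y : X₁) : PN N x - PN N y = PN N (x - y) := by
  unfold PN
  rw [← Finset.sum_sub_distrib]
  refine Finset.sum_congr rfl ?_
  intro k _
  rw [lam_sub', sub_smul]

lemma PN_comb (N : ℕ) (c : ℕ → ℝ) (A : Finset ℕ) (hA : A ⊆ Finset.range N) :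
    PN N (∑ k ∈ A, c k • lindVec k) = ∑ k ∈ A, c k • lindVec k := by
  unfold PN
  have h1 : ∀ k ∈ Finset.range N,
      lam (⇑(∑ j ∈ A, c j • lindVec j)) k • lindVec k
        = if k ∈ A then c k • lindVec k else 0 := by
    intro k _
    rw [lam_comb]
    by_cases h : k ∈ A <;> simp [h]
  rw [Finset.sum_congr rfl h1, Finset.sum_ite_mem, Finset.inter_eq_right.mpr hA]

lemma expands (f : ↥lindSpan) : ExpandsTo lindSeq (fun k => lam (⇑(f : X₁)) k) f := by
  rw [ExpandsTo, tendsto_val]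
  have hval : ∀ N, ((∑ j ∈ Finset.range N, lam (⇑(f : X₁)) j • lindSeq j : ↥lindSpan) : X₁)
      = PN N (f : X₁) := fun N => partial_val _ _
  rw [Metric.tendsto_atTop]
  intro ε hε
  have hf : (f : X₁) ∈ closure ((Submodule.span ℝ (Set.range lindVec) : Submodule ℝ X₁) : Set X₁) := by
    have h2 : (f : X₁) ∈ (((Submodule.span ℝ (Set.range lindVec)).topologicalClosure :
        Submodule ℝ X₁) : Set X₁) := f.2
    rwa [Submodule.topologicalClosure_coe] at h2
  obtain ⟨g, hg, hdist⟩ := Metric.mem_closure_iff.mp hf (ε/4) (by linarith)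
  have hng : ‖(f : X₁) - g‖ < ε/4 := by rwa [← dist_eq_norm]
  obtain ⟨c, hc⟩ := Finsupp.mem_span_range_iff_exists_finsupp.mp hg
  have hgc : g = ∑ k ∈ c.support, c k • lindVec k := by
    rw [← hc]; rfl
  refine ⟨(c.support.sup id) + 1, ?_⟩
  intro N hN
  have hsub : c.support ⊆ Finset.range N := by
    intro k hk
    rw [Finset.mem_range]
    have := Finset.le_sup (f := id) hk
    simp only [id_eq] at this
    omega
  have hPNg : PN N g = g := by rw [hgc]; exact PN_comb N c c.support hsub
  rw [hval N, dist_eq_norm]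
  have : PN N (f : X₁) - (f : X₁) = PN N ((f : X₁) - g) + (g - (f : X₁)) := by
    rw [← PN_sub, hPNg]; abel
  rw [this]
  calc ‖PN N ((f : X₁) - g) + (g - (f : X₁))‖
      ≤ ‖PN N ((f : X₁) - g)‖ + ‖g - (f : X₁)‖ := norm_add_le _ _
    _ ≤ 2 * ‖(f : X₁) - g‖ + ‖g - (f : X₁)‖ := by
        have := basis_bound ((f : X₁) - g) N
        unfold PN
        linarith
    _ < ε := by
        rw [norm_sub_rev g]
        linarith

lemma expansion_unique (f : ↥lindSpan) (a : ℕ → ℝ) (h : ExpandsTo lindSeq a f) (k : ℕ) :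
    a k = lam (⇑(f : X₁)) k := by
  rw [ExpandsTo, tendsto_val] at h
  have hval : ∀ N, ((∑ j ∈ Finset.range N, a j • lindSeq j : ↥lindSpan) : X₁)
      = ∑ j ∈ Finset.range N, a j • lindVec j := fun N => partial_val _ _
  set u : ℕ → X₁ := fun N => ∑ j ∈ Finset.range N, a j • lindVec j with hu
  have hu' : Tendsto u atTop (nhds (f : X₁)) := by
    refine h.congr ?_
    intro N
    exact hval N
  have hdist : Tendsto (fun N => dist (u N) (f : X₁)) atTop (nhds 0) :=
    tendsto_iff_dist_tendsto_zero.mp hu'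
  have hlam : Tendsto (fun N => lam (⇑(u N)) k) atTop (nhds (lam (⇑(f : X₁)) k)) := by
    rw [tendsto_iff_dist_tendsto_zero]
    refine squeeze_zero (g := fun N => (2:ℝ) * dist (u N) (f : X₁))
      (fun N => dist_nonneg) (fun N => ?_) ?_
    · simp only [dist_eq_norm]
      exact lam_lip (u N) (f : X₁) k
    · simpa using hdist.const_mul 2
  have hconst : Tendsto (fun N => lam (⇑(u N)) k) atTop (nhds (a k)) := by
    refine tendsto_const_nhds.congr' ?_
    filter_upwards [eventually_ge_atTop (k+1)] with N hN
    rw [hu]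
    simp only
    rw [lam_comb]
    rw [if_pos (Finset.mem_range.mpr (by omega))]
  exact (tendsto_nhds_unique hconst hlam)

lemma isSchauder : IsSchauderBasis lindSeq := by
  intro f
  refine ⟨fun k => lam (⇑(f : X₁)) k, expands f, ?_⟩
  intro a ha
  funext k
  exact expansion_unique f a ha k

lemma coordFn_eq (f : ↥lindSpan) (k : ℕ) :
    coordFn lindSeq k f = lam (⇑(f : X₁)) k := by
  unfold coordFn
  have hex : ∃ a : ℕ → ℝ, ExpandsTo lindSeq a f := ⟨_, expands f⟩
  rw [dif_pos hex]
  exact expansion_unique f hex.choose hex.choose_spec k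

lemma coordProj_val (A : Finset ℕ) (f : ↥lindSpan) :
    ((coordProj lindSeq A f : ↥lindSpan) : X₁) = ∑ n ∈ A, lam (⇑(f : X₁)) n • lindVec n := by
  unfold coordProj
  rw [Submodule.coe_sum]
  refine Finset.sum_congr rfl ?_
  intro n _
  rw [coordFn_eq]
  rfl

end Lind

namespace Lind

lemma sub_coordProj_val (f : ↥lindSpan) (A : Finset ℕ) :
    ‖f - coordProj lindSeq A f‖
      = ‖(f : X₁) - ∑ n ∈ A, lam (⇑(f : X₁)) n • lindVec n‖ := by
  rw [Submodule.coe_norm]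
  congr 1
  push_cast
  rw [coordProj_val]

theorem almostGreedy : AlmostGreedyBasis lindSeq := by
  classical
  refine ⟨isSchauder, 9, ?_⟩
  intro f A B hcard hgreedy
  set a : ℕ → ℝ := fun n => lam (⇑(f : X₁)) n with ha
  rcases Finset.eq_empty_or_nonempty A with hAe | hAne
  · subst hAe
    have hB : B = ∅ := Finset.card_eq_zero.mp (by simpa using hcard)
    subst hB
    have h9 : (0:ℝ) ≤ ‖f - coordProj lindSeq ∅ f‖ := norm_nonneg _
    linarith
  · set t := A.inf' hAne (fun k => |a k|) with hts
    have ht_le : ∀ k ∈ A, t ≤ |a k| := fun k hk => Finset.inf'_le _ hk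
    obtain ⟨k₀, hk₀A, hk₀⟩ := Finset.exists_mem_eq_inf' hAne (fun k => |a k|)
    have ht_out : ∀ j, j ∉ A → |a j| ≤ t := by
      intro j hj
      have := hgreedy j hj k₀ hk₀A
      rw [coordFn_eq, coordFn_eq] at this
      rw [hts, hk₀]
      exact this
    have ht0 : 0 ≤ t := by rw [hts, hk₀]; exact abs_nonneg _
    set gv : X₁ := (f : X₁) - ∑ n ∈ B, a n • lindVec n with hgv
    have hlamg : ∀ n, lam (⇑gv) n = if n ∈ B then 0 else a n := by
      intro n
      rw [hgv, lam_sub', lam_comb]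
      by_cases h : n ∈ B <;> simp [h, ha]
    set D := A \ B with hD
    have h1 : ∀ n ∈ D, t ≤ |lam (⇑gv) n| := by
      intro n hn
      rw [Finset.mem_sdiff] at hn
      rw [hlamg, if_neg hn.2]
      exact ht_le n hn.1
    have h2 : ∀ n, n ∉ D → |lam (⇑gv) n| ≤ t := by
      intro n hn
      rw [hlamg]
      by_cases hB : n ∈ B
      · rw [if_pos hB]; simpa using ht0
      · rw [if_neg hB]
        have hnA : n ∉ A := by
          intro hA
          exact hn (Finset.mem_sdiff.mpr ⟨hA, hB⟩)
        exact ht_out n hnA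
    -- the decomposition
    have hdec : (f : X₁) - ∑ n ∈ A, a n • lindVec n
        = (gv - ∑ n ∈ D, lam (⇑gv) n • lindVec n) + ∑ n ∈ B \ A, a n • lindVec n := by
      have hDsum : ∑ n ∈ D, lam (⇑gv) n • lindVec n = ∑ n ∈ D, a n • lindVec n := by
        refine Finset.sum_congr rfl ?_
        intro n hn
        rw [hlamg, if_neg (Finset.mem_sdiff.mp hn).2]
      rw [hDsum, hgv]
      have e1 : ∑ n ∈ A, a n • lindVec n
          = ∑ n ∈ A ∩ B, a n • lindVec n + ∑ n ∈ A \ B, a n • lindVec n :=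
        (Finset.sum_inter_add_sum_sdiff A B _).symm
      have e2 : ∑ n ∈ B, a n • lindVec n
          = ∑ n ∈ A ∩ B, a n • lindVec n + ∑ n ∈ B \ A, a n • lindVec n := by
        rw [Finset.inter_comm]
        exact (Finset.sum_inter_add_sum_sdiff B A _).symm
      rw [e1, e2, hD]
      abel
    have hproj : ‖∑ n ∈ D, lam (⇑gv) n • lindVec n‖ ≤ 4 * ‖gv‖ :=
      proj_norm_le gv D t h1 h2
    have hcore := core_ii (⇑gv) D t h1 h2
    have hDg : ∑ n ∈ D, |gv n| ≤ ‖gv‖ := by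
      rw [norm1]
      exact Summable.sum_le_tsum D (fun n _ => abs_nonneg _) (summ gv)
    have hcardBA : ((B \ A).card : ℝ) ≤ (D.card : ℝ) := by
      have c1 := Finset.card_sdiff_add_card_inter A B
      have c2 := Finset.card_sdiff_add_card_inter B A
      have c3 : (A ∩ B).card = (B ∩ A).card := by rw [Finset.inter_comm]
      rw [hD]
      exact_mod_cast by omega
    have hBA : ‖∑ n ∈ B \ A, a n • lindVec n‖ ≤ 4 * ‖gv‖ := by
      calc ‖∑ n ∈ B \ A, a n • lindVec n‖ ≤ 2 * ∑ n ∈ B \ A, |a n| := norm_comb_le _ _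
        _ ≤ 2 * (t * (B \ A).card) := by
            have : ∑ n ∈ B \ A, |a n| ≤ ∑ n ∈ B \ A, t := by
              refine Finset.sum_le_sum ?_
              intro n hn
              exact ht_out n (Finset.mem_sdiff.mp hn).2
            rw [Finset.sum_const, nsmul_eq_mul] at this
            nlinarith [this]
        _ ≤ 2 * (t * D.card) := by nlinarith [ht0, hcardBA, mul_le_mul_of_nonneg_left hcardBA ht0]
        _ ≤ 2 * (2 * ∑ n ∈ D, |gv n|) := by nlinarith [hcore]
        _ ≤ 4 * ‖gv‖ := by linarith
    -- assemble
    rw [sub_coordProj_val, sub_coordProj_val]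
    have hgveq : ‖(f : X₁) - ∑ n ∈ B, lam (⇑(f : X₁)) n • lindVec n‖ = ‖gv‖ := by
      rw [hgv]
    rw [hgveq]
    rw [show (f : X₁) - ∑ n ∈ A, lam (⇑(f : X₁)) n • lindVec n
          = (f : X₁) - ∑ n ∈ A, a n • lindVec n from rfl]
    rw [hdec]
    calc ‖(gv - ∑ n ∈ D, lam (⇑gv) n • lindVec n) + ∑ n ∈ B \ A, a n • lindVec n‖
        ≤ ‖gv - ∑ n ∈ D, lam (⇑gv) n • lindVec n‖ + ‖∑ n ∈ B \ A, a n • lindVec n‖ :=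
          norm_add_le _ _
      _ ≤ (‖gv‖ + ‖∑ n ∈ D, lam (⇑gv) n • lindVec n‖) + 4 * ‖gv‖ := by
          have := norm_sub_le gv (∑ n ∈ D, lam (⇑gv) n • lindVec n)
          linarith
      _ ≤ 9 * ‖gv‖ := by linarith

end Lind

namespace Lind

lemma sum_lam_le (f : X₁) : ∀ N : ℕ, 1 ≤ N →
    ∑ n ∈ Finset.range N, |lam (⇑f) n| ≤ ((Nat.log 2 N : ℝ) + 1) * ‖f‖ := by
  intro N
  induction N using Nat.strong_induction_on with
  | _ N ih =>
    intro hN1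
    rcases eq_or_lt_of_le hN1 with h1 | h2
    · -- N = 1
      rw [← h1]
      have : ∑ n ∈ Finset.range 1, |lam (⇑f) n| = |f 0| := by
        rw [Finset.sum_range_one, lam_zero_eq]
      rw [this]
      have := apply_le_norm f 0
      simp
      linarith
    · -- N ≥ 2
      have hN2 : 2 ≤ N := h2
      have hG := core_G1 (⇑f) (Finset.range N)
      -- bound the parent sum
      have hpar : ∑ n ∈ (Finset.range N).erase 0, |lam (⇑f) (par n)|
          ≤ 2 * ∑ m ∈ Finset.range (N/2), |lam (⇑f) m| := by
        have h0 : (0:ℕ) ∉ (Finset.range N).erase 0 := by simp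
        rw [sum_parent _ h0 (fun m => |lam (⇑f) m|)]
        have himg : ((Finset.range N).erase 0).image par ⊆ Finset.range (N/2) := by
          intro m hm
          rw [Finset.mem_image] at hm
          obtain ⟨n, hn, rfl⟩ := hm
          rw [Finset.mem_erase, Finset.mem_range] at hn
          rw [Finset.mem_range]
          unfold par
          omega
        calc ∑ m ∈ ((Finset.range N).erase 0).image par,
              ((if 2*m+1 ∈ (Finset.range N).erase 0 then (1:ℝ) else 0)
                + (if 2*m+2 ∈ (Finset.range N).erase 0 then (1:ℝ) else 0)) * |lam (⇑f) m|
            ≤ ∑ m ∈ ((Finset.range N).erase 0).image par, 2 * |lam (⇑f) m| := by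
              refine Finset.sum_le_sum ?_
              intro m _
              have hb : ((if 2*m+1 ∈ (Finset.range N).erase 0 then (1:ℝ) else 0)
                + (if 2*m+2 ∈ (Finset.range N).erase 0 then (1:ℝ) else 0)) ≤ 2 := by
                split_ifs <;> norm_num
              have ha := abs_nonneg (lam (⇑f) m)
              nlinarith
          _ ≤ ∑ m ∈ Finset.range (N/2), 2 * |lam (⇑f) m| := by
              refine Finset.sum_le_sum_of_subset_of_nonneg himg ?_
              intro m _ _
              positivity
          _ = 2 * ∑ m ∈ Finset.range (N/2), |lam (⇑f) m| := by rw [Finset.mul_sum]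
      have hf : ∑ n ∈ Finset.range N, |f n| ≤ ‖f‖ := by
        rw [norm1]
        exact Summable.sum_le_tsum _ (fun n _ => abs_nonneg _) (summ f)
      have hIH := ih (N/2) (by omega) (by omega)
      have hlog : (Nat.log 2 (N/2) : ℝ) + 1 = Nat.log 2 N := by
        have h1 := Nat.log_div_base 2 N
        have h2 := Nat.log_pos (b := 2) (by norm_num) hN2
        have : Nat.log 2 (N/2) + 1 = Nat.log 2 N := by omega
        exact_mod_cast this
      calc ∑ n ∈ Finset.range N, |lam (⇑f) n|
          ≤ ∑ n ∈ Finset.range N, |f n|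
            + (1/2) * ∑ n ∈ (Finset.range N).erase 0, |lam (⇑f) (par n)| := hG
        _ ≤ ‖f‖ + ∑ m ∈ Finset.range (N/2), |lam (⇑f) m| := by linarith
        _ ≤ ‖f‖ + ((Nat.log 2 (N/2) : ℝ) + 1) * ‖f‖ := by linarith
        _ = ((Nat.log 2 N : ℝ) + 1) * ‖f‖ := by rw [← hlog]; ring

end Lind

namespace Lind

/-- depth in the binary tree -/
def dep (n : ℕ) : ℕ := Nat.log 2 (n+1)

lemma dep_zero : dep 0 = 0 := by simp [dep]

lemma dep_c1 (m : ℕ) : dep (2*m+1) = dep m + 1 := by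
  unfold dep
  have : 2*m+1+1 = (m+1) * 2 := by ring
  rw [this, Nat.log_mul_base (by norm_num) (by omega)]

lemma dep_c2 (m : ℕ) : dep (2*m+2) = dep m + 1 := by
  unfold dep
  have hl := Nat.pow_log_le_self 2 (x := m+1) (by omega)
  have hu := Nat.lt_pow_succ_log_self (b := 2) (by norm_num) (m+1)
  set e := Nat.log 2 (m+1) with he
  refine Nat.log_eq_of_pow_le_of_lt_pow ?_ ?_
  · rw [pow_succ]; omega
  · have : 2^(e+1+1) = 2^e * 4 := by rw [pow_succ, pow_succ]; ring
    rw [this]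
    rw [pow_succ] at hu
    omega

lemma dep_par {n : ℕ} (hn : n ≠ 0) : dep n = dep (par n) + 1 := by
  rcases (par_children (par n) n hn).mp rfl with h | h
  · rw [h] at *; rw [dep_c1, par_c1]
  · rw [h] at *; rw [dep_c2, par_c2]

lemma dep_interval {e n : ℕ} (h1 : 2^e - 1 ≤ n) (h2 : n < 2^(e+1) - 1) : dep n = e := by
  unfold dep
  have hp : 1 ≤ 2^e := Nat.one_le_two_pow
  refine Nat.log_eq_of_pow_le_of_lt_pow (by omega) ?_
  have : 1 ≤ 2^(e+1) := Nat.one_le_two_pow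
  omega

lemma sum_dep (h : ℕ) :
    ∑ n ∈ Finset.range (2^(h+1) - 1), ((1/2 : ℝ))^(dep n) = h + 1 := by
  induction h with
  | zero => simp [dep_zero]
  | succ h ih =>
    have hle1 : 2^(h+1) - 1 ≤ 2^(h+2) - 1 := by
      have : (2:ℕ)^(h+1) ≤ 2^(h+2) := Nat.pow_le_pow_right (by norm_num) (by omega)
      omega
    have hsplit := Finset.sum_Ico_consecutive (fun n => ((1/2:ℝ))^(dep n))
      (Nat.zero_le (2^(h+1) - 1)) hle1
    rw [Finset.range_eq_Ico, ← hsplit, ← Finset.range_eq_Ico]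
    rw [ih]
    have hconst : ∑ n ∈ Finset.Ico (2^(h+1) - 1) (2^(h+2) - 1), ((1/2:ℝ))^(dep n)
        = ∑ n ∈ Finset.Ico (2^(h+1) - 1) (2^(h+2) - 1), ((1/2:ℝ))^(h+1) := by
      refine Finset.sum_congr rfl ?_
      intro n hn
      rw [Finset.mem_Ico] at hn
      rw [dep_interval hn.1 hn.2]
    rw [hconst, Finset.sum_const, Nat.card_Ico, nsmul_eq_mul]
    have hcard : 2^(h+2) - 1 - (2^(h+1) - 1) = 2^(h+1) := by
      have : (2:ℕ)^(h+2) = 2 * 2^(h+1) := by rw [pow_succ]; ring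
      have h1 : 1 ≤ (2:ℕ)^(h+1) := Nat.one_le_two_pow
      omega
    rw [hcard]
    have : ((2^(h+1) : ℕ) : ℝ) * ((1/2:ℝ))^(h+1) = 1 := by
      push_cast
      rw [← mul_pow]
      norm_num
    rw [this]
    push_cast
    ring

end Lind

namespace Lind

def LSet (m : ℕ) : Set ℝ :=
  {r : ℝ | ∃ f ∈ Submodule.span ℝ (lindSeq '' Set.Iio m), f ≠ 0 ∧
    ∃ A : Finset ℕ, r = ‖coordProj lindSeq A f‖ / ‖f‖}

lemma Lconst_eq_sSup (m : ℕ) : Lconst lindSeq m = sSup (LSet m) := rfl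

lemma span_image_eq (m : ℕ) :
    lindSeq '' Set.Iio m = Set.range (fun i : Fin m => lindSeq (i : ℕ)) := by
  ext y
  simp only [Set.mem_image, Set.mem_Iio, Set.mem_range]
  constructor
  · rintro ⟨k, hk, rfl⟩
    exact ⟨⟨k, hk⟩, rfl⟩
  · rintro ⟨i, rfl⟩
    exact ⟨i, i.2, rfl⟩

lemma LSet_mem_le {m : ℕ} (hm : 1 ≤ m) {r : ℝ} (hr : r ∈ LSet m) :
    r ≤ 2 * ((Nat.log 2 m : ℝ) + 1) := by
  classical
  obtain ⟨f, hfspan, hf0, A, rfl⟩ := hr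
  rw [span_image_eq] at hfspan
  obtain ⟨c, hc⟩ := (Submodule.mem_span_range_iff_exists_fun ℝ).mp hfspan
  set c' : ℕ → ℝ := fun n => if h : n < m then c ⟨n, h⟩ else 0 with hc'
  have hval : (f : X₁) = ∑ n ∈ Finset.range m, c' n • lindVec n := by
    rw [← hc, Submodule.coe_sum]
    have e1 : ∀ i : Fin m, ((c i • lindSeq (i:ℕ) : ↥lindSpan) : X₁)
        = c' (i:ℕ) • lindVec (i:ℕ) := by
      intro i
      rw [hc']
      simp only [dif_pos i.2, Fin.eta]
      rfl
    rw [Finset.sum_congr rfl (fun i _ => e1 i)]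
    exact Fin.sum_univ_eq_sum_range (fun n => c' n • lindVec n) m
  have ha : ∀ n, lam (⇑(f : X₁)) n = if n ∈ Finset.range m then c' n else 0 := by
    intro n
    rw [hval, lam_comb]
  have hfpos : (0:ℝ) < ‖f‖ := norm_pos_iff.mpr hf0
  have hproj : ‖coordProj lindSeq A f‖ ≤ 2 * ((Nat.log 2 m : ℝ) + 1) * ‖f‖ := by
    have h1 : ‖coordProj lindSeq A f‖ = ‖∑ n ∈ A, lam (⇑(f : X₁)) n • lindVec n‖ := by
      rw [Submodule.coe_norm, coordProj_val]
    rw [h1]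
    have h2 : ∑ n ∈ A, |lam (⇑(f : X₁)) n| = ∑ n ∈ A ∩ Finset.range m, |lam (⇑(f : X₁)) n| := by
      refine (Finset.sum_subset Finset.inter_subset_left ?_).symm
      intro n hnA hn
      have : n ∉ Finset.range m := fun h => hn (Finset.mem_inter.mpr ⟨hnA, h⟩)
      rw [ha, if_neg this, abs_zero]
    have h3 : ∑ n ∈ A ∩ Finset.range m, |lam (⇑(f : X₁)) n|
        ≤ ∑ n ∈ Finset.range m, |lam (⇑(f : X₁)) n| :=
      Finset.sum_le_sum_of_subset_of_nonneg Finset.inter_subset_right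
        (fun n _ _ => abs_nonneg _)
    have h4 := sum_lam_le (f : X₁) m hm
    have h5 : ‖(f : X₁)‖ = ‖f‖ := (Submodule.coe_norm f).symm
    calc ‖∑ n ∈ A, lam (⇑(f : X₁)) n • lindVec n‖
        ≤ 2 * ∑ n ∈ A, |lam (⇑(f : X₁)) n| := norm_comb_le _ _
      _ ≤ 2 * (((Nat.log 2 m : ℝ) + 1) * ‖f‖) := by rw [h2]; rw [← h5]; linarith
      _ = 2 * ((Nat.log 2 m : ℝ) + 1) * ‖f‖ := by ring
  rw [div_le_iff₀ hfpos]
  exact hproj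

lemma LSet_bddAbove {m : ℕ} (hm : 1 ≤ m) : BddAbove (LSet m) :=
  ⟨2 * ((Nat.log 2 m : ℝ) + 1), fun r hr => LSet_mem_le hm hr⟩

lemma Lconst_le {m : ℕ} (hm : 1 ≤ m) :
    Lconst lindSeq m ≤ 2 * ((Nat.log 2 m : ℝ) + 1) := by
  rw [Lconst_eq_sSup]
  exact Real.sSup_le (fun r hr => LSet_mem_le hm hr) (by positivity)

lemma Lconst_ge {m : ℕ} (hm : 2 ≤ m) :
    ((Nat.log 2 (m+1) : ℝ)) / 2 ≤ Lconst lindSeq m := by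
  classical
  set L := Nat.log 2 (m+1) with hLdef
  have hL1 : 1 ≤ L := Nat.log_pos (by norm_num) (by omega)
  set h := L - 1 with hh
  have hLh : h + 1 = L := by omega
  set K := 2^(h+1) - 1 with hK
  have hpow : 2^L ≤ m + 1 := Nat.pow_log_le_self 2 (by omega)
  have hKm : K ≤ m := by rw [hK, hLh]; omega
  have h2h : 1 ≤ (2:ℕ)^h := Nat.one_le_two_pow
  have hKval : K = 2 * 2^h - 1 := by rw [hK, pow_succ]; ring_nf
  have hK1 : 1 ≤ K := by omega
  set T := Finset.range K with hT
  set cdep : ℕ → ℝ := fun n => (1/2:ℝ)^(dep n) with hcdep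
  set fX : X₁ := ∑ k ∈ T, cdep k • lindVec k with hfX
  set fS : ↥lindSpan := ⟨fX, comb_mem _ _⟩ with hfS
  -- coordinates of fX
  have hcoord : ∀ n, (fX : ∀ _ : ℕ, ℝ) n
      = (if n ∈ T then cdep n else 0)
        - (1/2) * (if n ≠ 0 ∧ par n ∈ T then cdep (par n) else 0) := by
    intro n
    rw [hfX]
    exact coord_sum cdep T n
  -- fS ≠ 0
  have hfne : fS ≠ 0 := by
    intro h0
    have hval0 : fX = 0 := by
      have := congrArg (fun z : ↥lindSpan => (z : X₁)) h0
      simpa [hfS] using this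
    have h1 := hcoord 0
    rw [hval0] at h1
    have h2 : (0:ℕ) ∈ T := by rw [hT, Finset.mem_range]; omega
    rw [if_pos h2, if_neg (by simp)] at h1
    have : cdep 0 = 1 := by rw [hcdep]; simp [dep_zero]
    rw [this] at h1
    simp [lp.coeFn_zero] at h1
  -- span membership
  have hmem : fS ∈ Submodule.span ℝ (lindSeq '' Set.Iio m) := by
    have heq : fS = ∑ k ∈ T, cdep k • lindSeq k := by
      refine Subtype.ext ?_
      rw [hfS]
      exact (partial_val cdep T).symm
    rw [heq]
    refine Submodule.sum_mem _ ?_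
    intro k hk
    refine Submodule.smul_mem _ _ (Submodule.subset_span ?_)
    rw [hT, Finset.mem_range] at hk
    exact ⟨k, by simp only [Set.mem_Iio]; omega, rfl⟩
  -- norm of fX ≤ 2
  have hnK : ∀ k ∈ T, k < K := by intro k hk; rwa [hT, Finset.mem_range] at hk
  have hnorm2 : ‖fX‖ ≤ 2 := by
    rw [hfX, norm_comb_eq cdep T K hnK]
    rw [← hfX]
    have hsplit := Finset.sum_Ico_consecutive (fun n => |(fX : ∀ _ : ℕ, ℝ) n|)
      (Nat.zero_le K) (by omega : K ≤ 2*K+1)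
    rw [Finset.range_eq_Ico, ← hsplit]
    have hS1 : ∑ n ∈ Finset.Ico 0 K, |(fX : ∀ _ : ℕ, ℝ) n| = 1 := by
      have hterm : ∀ n ∈ Finset.Ico 0 K, |(fX : ∀ _ : ℕ, ℝ) n| = if n = 0 then 1 else 0 := by
        intro n hn
        rw [Finset.mem_Ico] at hn
        rw [hcoord]
        by_cases hn0 : n = 0
        · subst hn0
          rw [if_pos (by rw [hT, Finset.mem_range]; omega), if_neg (by simp)]
          rw [hcdep]
          simp [dep_zero]
        · have hnT : n ∈ T := by rw [hT, Finset.mem_range]; omega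
          have hpT : par n ∈ T := by
            rw [hT, Finset.mem_range]
            exact (par_lt hn0).trans hn.2
          rw [if_pos hnT, if_pos ⟨hn0, hpT⟩, if_neg hn0]
          rw [hcdep]
          simp only
          rw [dep_par hn0]
          rw [abs_eq_zero]
          ring
      rw [Finset.sum_congr rfl hterm]
      rw [Finset.sum_ite_eq' (Finset.Ico 0 K) 0 (fun _ => (1:ℝ))]
      rw [if_pos (by rw [Finset.mem_Ico]; omega)]
    have hS2 : ∑ n ∈ Finset.Ico K (2*K+1), |(fX : ∀ _ : ℕ, ℝ) n| = 1 := by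
      have hterm : ∀ n ∈ Finset.Ico K (2*K+1), |(fX : ∀ _ : ℕ, ℝ) n| = (1/2:ℝ)^(h+1) := by
        intro n hn
        rw [Finset.mem_Ico] at hn
        have hn0 : n ≠ 0 := by omega
        have hnT : n ∉ T := by rw [hT, Finset.mem_range]; omega
        have hpK : par n < K := by unfold par; omega
        have hpT : par n ∈ T := by rw [hT, Finset.mem_range]; exact hpK
        rw [hcoord, if_neg hnT, if_pos ⟨hn0, hpT⟩]
        have hdeppar : dep (par n) = h := by
          refine dep_interval ?_ ?_
          · unfold par; omega
          · omega
        rw [hcdep]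
        simp only
        rw [hdeppar]
        rw [zero_sub, abs_neg, abs_mul]
        rw [abs_of_nonneg (by positivity : (0:ℝ) ≤ (1/2:ℝ)^h)]
        rw [pow_succ]
        rw [abs_of_nonneg (by norm_num : (0:ℝ) ≤ (1:ℝ)/2)]
        ring
      rw [Finset.sum_congr rfl hterm, Finset.sum_const, Nat.card_Ico, nsmul_eq_mul]
      have hcard : 2*K+1 - K = 2^(h+1) := by omega
      rw [hcard]
      have : ((2^(h+1) : ℕ) : ℝ) * ((1/2:ℝ))^(h+1) = 1 := by
        push_cast
        rw [← mul_pow]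
        norm_num
      rw [this]
    rw [hS1, hS2]
    norm_num
  -- the greedy-type set
  set A' : Finset ℕ := T.filter (fun n => dep n % 2 = 0) with hA'
  -- projection norm lower bound
  have hlamfX : ∀ n, lam (⇑fX) n = if n ∈ T then cdep n else 0 := by
    intro n
    rw [hfX, lam_comb]
  have hprojval : ((coordProj lindSeq A' fS : ↥lindSpan) : X₁)
      = ∑ n ∈ A', cdep n • lindVec n := by
    rw [coordProj_val]
    refine Finset.sum_congr rfl ?_
    intro n hn
    have hnT : n ∈ T := Finset.mem_filter.mp (hA' ▸ hn) |>.1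
    have : (⇑(fS : X₁)) = ⇑fX := rfl
    rw [this, hlamfX, if_pos hnT]
  have hgcoord : ∀ n, ((∑ k ∈ A', cdep k • lindVec k : X₁) : ∀ _ : ℕ, ℝ) n
      = (if n ∈ A' then cdep n else 0)
        - (1/2) * (if n ≠ 0 ∧ par n ∈ A' then cdep (par n) else 0) := fun n => coord_sum cdep A' n
  have hproj_ge : (h:ℝ) + 1 ≤ ‖coordProj lindSeq A' fS‖ := by
    rw [Submodule.coe_norm, hprojval]
    have hterm : ∀ n ∈ Finset.range K,
        |((∑ k ∈ A', cdep k • lindVec k : X₁) : ∀ _ : ℕ, ℝ) n| = (1/2:ℝ)^(dep n) := by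
      intro n hn
      rw [Finset.mem_range] at hn
      have hnT : n ∈ T := by rw [hT, Finset.mem_range]; exact hn
      rw [hgcoord]
      by_cases hpar : dep n % 2 = 0
      · have hnA : n ∈ A' := by rw [hA', Finset.mem_filter]; exact ⟨hnT, hpar⟩
        have hnoA : ¬ (n ≠ 0 ∧ par n ∈ A') := by
          rintro ⟨hn0, hpA⟩
          have := (Finset.mem_filter.mp (hA' ▸ hpA)).2
          rw [dep_par hn0] at hpar
          omega
        rw [if_pos hnA, if_neg hnoA, mul_zero, sub_zero]
        simp only [hcdep]
        exact abs_of_nonneg (by positivity)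
      · have hn0 : n ≠ 0 := by
          intro h0
          rw [h0, dep_zero] at hpar
          omega
        have hnA : n ∉ A' := by
          rw [hA', Finset.mem_filter]
          rintro ⟨_, hp⟩
          omega
        have hpA : par n ∈ A' := by
          rw [hA', Finset.mem_filter]
          constructor
          · rw [hT, Finset.mem_range]
            exact (par_lt hn0).trans hn
          · have := dep_par hn0
            omega
        rw [if_neg hnA, if_pos ⟨hn0, hpA⟩]
        rw [hcdep]
        simp only
        rw [zero_sub, abs_neg, abs_mul, dep_par hn0]
        rw [abs_of_nonneg (by positivity : (0:ℝ) ≤ (1/2:ℝ)^(dep (par n)))]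
        rw [abs_of_nonneg (by norm_num : (0:ℝ) ≤ (1:ℝ)/2)]
        rw [pow_succ]
        ring
    have hsum : ∑ n ∈ Finset.range K, |((∑ k ∈ A', cdep k • lindVec k : X₁) : ∀ _ : ℕ, ℝ) n|
        = (h:ℝ) + 1 := by
      rw [Finset.sum_congr rfl hterm]
      rw [hK]
      exact sum_dep h
    calc (h:ℝ) + 1 = ∑ n ∈ Finset.range K,
          |((∑ k ∈ A', cdep k • lindVec k : X₁) : ∀ _ : ℕ, ℝ) n| := hsum.symm
      _ ≤ ‖(∑ k ∈ A', cdep k • lindVec k : X₁)‖ := by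
          rw [norm1]
          exact Summable.sum_le_tsum _ (fun n _ => abs_nonneg _) (summ _)
  -- assemble
  have hfSnorm : ‖fS‖ ≤ 2 := by rw [Submodule.coe_norm]; exact hnorm2
  have hfSpos : (0:ℝ) < ‖fS‖ := norm_pos_iff.mpr hfne
  have hrmem : ‖coordProj lindSeq A' fS‖ / ‖fS‖ ∈ LSet m := ⟨fS, hmem, hfne, A', rfl⟩
  have hrge : ((L:ℝ))/2 ≤ ‖coordProj lindSeq A' fS‖ / ‖fS‖ := by
    rw [le_div_iff₀ hfSpos]
    have hL' : ((L:ℝ)) = (h:ℝ) + 1 := by exact_mod_cast hLh.symm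
    rw [hL']
    have h1 : ((h:ℝ)+1)/2 * ‖fS‖ ≤ ((h:ℝ)+1)/2 * 2 := by
      refine mul_le_mul_of_nonneg_left hfSnorm (by positivity)
    calc ((h:ℝ)+1)/2 * ‖fS‖ ≤ ((h:ℝ)+1)/2 * 2 := h1
      _ = (h:ℝ)+1 := by ring
      _ ≤ ‖coordProj lindSeq A' fS‖ := hproj_ge
  rw [Lconst_eq_sSup]
  exact hrge.trans (le_csSup (LSet_bddAbove (by omega)) hrmem)

end Lind

namespace Lind

abbrev Pd (d : ℕ) := PiLp 1 (fun _ : Fin d => ℝ)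

lemma Pd_norm {d : ℕ} (z : Pd d) : ‖z‖ = ∑ i, |z i| := by
  rw [PiLp.norm_eq_sum (by norm_num : 0 < (1:ENNReal).toReal)]
  simp [Real.norm_eq_abs]

/-- Step 1: for combos over `range d`, the norm is controlled by the first `d` coordinates. -/
lemma comb_norm_le_coords (a : ℕ → ℝ) (d : ℕ) :
    ‖∑ k ∈ Finset.range d, a k • lindVec k‖
      ≤ 2 * ∑ n ∈ Finset.range d, |(↑(∑ k ∈ Finset.range d, a k • lindVec k) : ∀ _ : ℕ, ℝ) n| := by
  classical
  set g : X₁ := ∑ k ∈ Finset.range d, a k • lindVec k with hg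
  set D := Finset.range d with hD
  have hb : ∀ n, lam (⇑g) n = if n ∈ D then a n else 0 := fun n => by
    rw [hg]; exact lam_comb a D n
  -- support: coordinates vanish off D ∪ Cout D
  have hsupp : ∀ n, n ∉ D ∪ Cout D → (↑g : ∀ _ : ℕ, ℝ) n = 0 := by
    intro n hn
    rw [Finset.mem_union] at hn
    push_neg at hn
    rw [hg, coord_sum]
    rw [if_neg hn.1]
    have : ¬ (n ≠ 0 ∧ par n ∈ D) := by
      rintro ⟨h0, hp⟩
      exact hn.2 (mem_Cout.mpr ⟨hn.1, h0, hp⟩)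
    rw [if_neg this]
    ring
  have hdisj : Disjoint D (Cout D) := by
    rw [Finset.disjoint_left]
    intro x hx hc
    exact (mem_Cout.mp hc).1 hx
  have hnorm : ‖g‖ = ∑ n ∈ D ∪ Cout D, |(↑g : ∀ _ : ℕ, ℝ) n| := by
    rw [norm1]
    refine tsum_eq_sum ?_
    intro b hb'
    rw [hsupp b hb', abs_zero]
  rw [hnorm, Finset.sum_union hdisj]
  -- the Cout part
  have hCval : ∀ n ∈ Cout D, |(↑g : ∀ _ : ℕ, ℝ) n| = (1/2) * |lam (⇑g) (par n)| := by
    intro n hn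
    obtain ⟨hnD, hn0, hpD⟩ := mem_Cout.mp hn
    rw [hg, coord_sum, if_neg hnD, if_pos ⟨hn0, hpD⟩]
    rw [zero_sub, abs_neg, abs_mul]
    rw [abs_of_nonneg (by norm_num : (0:ℝ) ≤ (1:ℝ)/2)]
    congr 1
    rw [hb, if_pos hpD]
  rw [Finset.sum_congr rfl hCval]
  have hCsum : ∑ n ∈ Cout D, (1/2) * |lam (⇑g) (par n)|
      = (1/2) * ∑ m ∈ D, (2 - kappa D m) * |lam (⇑g) m| := by
    rw [← Finset.mul_sum, sum_par_out D (fun m => |lam (⇑g) m|)]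
  rw [hCsum]
  have hcore := core1 (⇑g) D
  rw [hD, Rout_range] at hcore
  simp only [Finset.sum_empty, add_zero] at hcore
  rw [← hD] at hcore
  linarith

/-- membership of range-d combos in the closed span -/
lemma comb_mem_spanC (a : ℕ → ℝ) (d : ℕ) :
    ∑ k ∈ Finset.range d, a k • lindVec k ∈ spanC lindVec d := by
  refine Submodule.le_topologicalClosure _ ?_
  refine Submodule.sum_mem _ ?_
  intro k hk
  refine Submodule.smul_mem _ _ (Submodule.subset_span ?_)
  exact ⟨k, by simp only [Set.mem_Iio]; exact Finset.mem_range.mp hk, rfl⟩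

lemma span_combo {d : ℕ} {f : X₁} (hf : f ∈ Submodule.span ℝ (lindVec '' Set.Iio d)) :
    ∃ a : ℕ → ℝ, f = ∑ k ∈ Finset.range d, a k • lindVec k := by
  classical
  have himg : lindVec '' Set.Iio d = Set.range (fun i : Fin d => lindVec (i : ℕ)) := by
    ext y
    simp only [Set.mem_image, Set.mem_Iio, Set.mem_range]
    constructor
    · rintro ⟨k, hk, rfl⟩
      exact ⟨⟨k, hk⟩, rfl⟩
    · rintro ⟨i, rfl⟩
      exact ⟨i, i.2, rfl⟩
  rw [himg] at hf
  obtain ⟨c, hc⟩ := (Submodule.mem_span_range_iff_exists_fun ℝ).mp hf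
  refine ⟨fun n => if h : n < d then c ⟨n, h⟩ else 0, ?_⟩
  rw [← hc]
  have e1 : ∀ i : Fin d, c i • lindVec (i:ℕ)
      = (fun n => if h : n < d then c ⟨n, h⟩ else 0) (i:ℕ) • lindVec (i:ℕ) := by
    intro i
    simp only [dif_pos i.2, Fin.eta]
  rw [Finset.sum_congr rfl (fun i _ => e1 i)]
  exact Fin.sum_univ_eq_sum_range (fun n => (fun n => if h : n < d then c ⟨n, h⟩ else 0) n • lindVec n) d

/-- coordinate evaluation is Lipschitz on X₁ -/
lemma eval_lip (n : ℕ) : LipschitzWith 1 (fun f : X₁ => (↑f : ∀ _ : ℕ, ℝ) n) := by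
  refine LipschitzWith.of_dist_le_mul ?_
  intro x y
  rw [Real.dist_eq, dist_eq_norm]
  have : (↑x : ∀ _ : ℕ, ℝ) n - (↑y : ∀ _ : ℕ, ℝ) n = (↑(x - y) : ∀ _ : ℕ, ℝ) n := by
    simp [lp.coeFn_sub]
  rw [this]
  simpa using apply_le_norm (x - y) n

/-- the key inequality extends to the closed span -/
lemma spanC_norm_le {d : ℕ} {f : X₁} (hf : f ∈ spanC lindVec d) :
    ‖f‖ ≤ 2 * ∑ n ∈ Finset.range d, |(↑f : ∀ _ : ℕ, ℝ) n| := by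
  classical
  have hclosed : IsClosed {f : X₁ | ‖f‖ ≤ 2 * ∑ n ∈ Finset.range d, |(↑f : ∀ _ : ℕ, ℝ) n|} := by
    refine isClosed_le continuous_norm ?_
    refine Continuous.mul continuous_const ?_
    refine continuous_finset_sum _ ?_
    intro n _
    exact ((eval_lip n).continuous).abs
  have hspan : (Submodule.span ℝ (lindVec '' Set.Iio d) : Set X₁)
      ⊆ {f : X₁ | ‖f‖ ≤ 2 * ∑ n ∈ Finset.range d, |(↑f : ∀ _ : ℕ, ℝ) n|} := by
    intro g hg
    obtain ⟨a, rfl⟩ := span_combo hg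
    exact comb_norm_le_coords a d
  have hf' : f ∈ closure ((Submodule.span ℝ (lindVec '' Set.Iio d) : Submodule ℝ X₁) : Set X₁) := by
    have h2 : f ∈ (((Submodule.span ℝ (lindVec '' Set.Iio d)).topologicalClosure :
        Submodule ℝ X₁) : Set X₁) := hf
    rwa [Submodule.topologicalClosure_coe] at h2
  exact (closure_minimal hspan hclosed) hf'

end Lind

namespace Lind

def zext (d : ℕ) (z : Pd d) : ∀ _ : ℕ, ℝ := fun n => if h : n < d then z ⟨n, h⟩ else 0

def TmapL (d : ℕ) : ↥(spanC lindVec d) →ₗ[ℝ] Pd d where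
  toFun f := (WithLp.equiv 1 _).symm (fun i => (↑(f : X₁) : ∀ _ : ℕ, ℝ) (i : ℕ))
  map_add' x y := by
    ext i
    simp only [WithLp.equiv_symm_apply, PiLp.toLp_apply, PiLp.add_apply]
    have h1 : ((↑(x + y) : X₁) : ∀ _ : ℕ, ℝ) (i:ℕ)
        = (↑(x:X₁) : ∀ _ : ℕ, ℝ) (i:ℕ) + (↑(y:X₁) : ∀ _ : ℕ, ℝ) (i:ℕ) := by
      have : ((x + y : ↥(spanC lindVec d)) : X₁) = (x : X₁) + (y : X₁) := rfl
      rw [this, lp.coeFn_add, Pi.add_apply]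
    exact h1
  map_smul' c x := by
    ext i
    simp only [WithLp.equiv_symm_apply, PiLp.toLp_apply, PiLp.smul_apply, RingHom.id_apply, smul_eq_mul]
    have h1 : ((↑(c • x) : X₁) : ∀ _ : ℕ, ℝ) (i:ℕ) = c * (↑(x:X₁) : ∀ _ : ℕ, ℝ) (i:ℕ) := by
      have : ((c • x : ↥(spanC lindVec d)) : X₁) = c • (x : X₁) := rfl
      rw [this, lp.coeFn_smul, Pi.smul_apply, smul_eq_mul]
    exact h1

lemma TmapL_apply (d : ℕ) (f : ↥(spanC lindVec d)) (i : Fin d) :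
    TmapL d f i = (↑(f : X₁) : ∀ _ : ℕ, ℝ) (i : ℕ) := by
  unfold TmapL
  simp only [LinearMap.coe_mk, AddHom.coe_mk]
  rw [WithLp.equiv_symm_apply, PiLp.toLp_apply]

lemma zext_add (d : ℕ) (z w : Pd d) :
    zext d (z + w) = fun n => zext d z n + zext d w n := by
  funext n
  unfold zext
  by_cases h : n < d
  · rw [dif_pos h, dif_pos h, dif_pos h, PiLp.add_apply]
  · rw [dif_neg h, dif_neg h, dif_neg h]; ring

lemma zext_smul (d : ℕ) (c : ℝ) (z : Pd d) :
    zext d (c • z) = fun n => c * zext d z n := by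
  funext n
  unfold zext
  by_cases h : n < d
  · rw [dif_pos h, dif_pos h, PiLp.smul_apply, smul_eq_mul]
  · rw [dif_neg h, dif_neg h]; ring

def SmapX (d : ℕ) : Pd d →ₗ[ℝ] X₁ where
  toFun z := ∑ k ∈ Finset.range d, lam (zext d z) k • lindVec k
  map_add' z w := by
    rw [← Finset.sum_add_distrib]
    refine Finset.sum_congr rfl ?_
    intro k _
    rw [zext_add, lam_add, add_smul]
  map_smul' c z := by
    simp only [RingHom.id_apply]
    rw [Finset.smul_sum]
    refine Finset.sum_congr rfl ?_
    intro k _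
    rw [zext_smul, lam_smul, smul_smul]

def SmapL (d : ℕ) : Pd d →ₗ[ℝ] ↥(spanC lindVec d) :=
  (SmapX d).codRestrict (spanC lindVec d) (fun z => comb_mem_spanC _ d)

lemma SmapL_val (d : ℕ) (z : Pd d) :
    ((SmapL d z : ↥(spanC lindVec d)) : X₁) = ∑ k ∈ Finset.range d, lam (zext d z) k • lindVec k := rfl

lemma TS_coord (d : ℕ) (z : Pd d) (i : Fin d) :
    (↑((SmapL d z : ↥(spanC lindVec d)) : X₁) : ∀ _ : ℕ, ℝ) (i : ℕ) = z i := by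
  rw [SmapL_val, coord_sum]
  have hi : (i : ℕ) ∈ Finset.range d := Finset.mem_range.mpr i.2
  rw [if_pos hi]
  by_cases h0 : (i : ℕ) = 0
  · rw [if_neg (by rw [h0]; simp)]
    rw [h0, lam_zero_eq]
    unfold zext
    rw [dif_pos (h0 ▸ i.2)]
    have : (⟨(0:ℕ), h0 ▸ i.2⟩ : Fin d) = i := by
      exact Fin.ext h0.symm
    rw [this]
    ring
  · have hpar : par (i : ℕ) ∈ Finset.range d :=
      Finset.mem_range.mpr ((par_lt h0).trans i.2)
    rw [if_pos ⟨h0, hpar⟩]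
    rw [lam_parent_eq _ h0]
    unfold zext
    rw [dif_pos i.2]

lemma Tmap_Smap (d : ℕ) (z : Pd d) : TmapL d (SmapL d z) = z := by
  ext i
  rw [TmapL_apply]
  exact TS_coord d z i

lemma Tmap_coords_sum (d : ℕ) (f : ↥(spanC lindVec d)) :
    ‖TmapL d f‖ = ∑ n ∈ Finset.range d, |(↑(f : X₁) : ∀ _ : ℕ, ℝ) n| := by
  rw [Pd_norm]
  rw [← Fin.sum_univ_eq_sum_range (fun n => |(↑(f : X₁) : ∀ _ : ℕ, ℝ) n|) d]
  refine Finset.sum_congr rfl ?_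
  intro i _
  rw [TmapL_apply]

lemma Tmap_norm_le (d : ℕ) (f : ↥(spanC lindVec d)) : ‖TmapL d f‖ ≤ ‖f‖ := by
  rw [Tmap_coords_sum, Submodule.coe_norm, norm1]
  exact Summable.sum_le_tsum _ (fun n _ => abs_nonneg _) (summ _)

lemma norm_le_two_Tmap (d : ℕ) (f : ↥(spanC lindVec d)) : ‖f‖ ≤ 2 * ‖TmapL d f‖ := by
  rw [Tmap_coords_sum, Submodule.coe_norm]
  exact spanC_norm_le f.2

lemma Smap_Tmap (d : ℕ) (f : ↥(spanC lindVec d)) : SmapL d (TmapL d f) = f := by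
  have h1 : TmapL d (SmapL d (TmapL d f)) = TmapL d f := Tmap_Smap d (TmapL d f)
  have h2 : TmapL d (SmapL d (TmapL d f) - f) = 0 := by
    rw [map_sub, h1, sub_self]
  have h3 : ‖SmapL d (TmapL d f) - f‖ ≤ 2 * ‖TmapL d (SmapL d (TmapL d f) - f)‖ :=
    norm_le_two_Tmap d _
  rw [h2, norm_zero] at h3
  have : ‖SmapL d (TmapL d f) - f‖ ≤ 0 := by linarith
  have := norm_le_zero_iff.mp this
  exact sub_eq_zero.mp this

def lequiv (d : ℕ) : ↥(spanC lindVec d) ≃ₗ[ℝ] Pd d :=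
  LinearEquiv.ofLinear (TmapL d) (SmapL d)
    (LinearMap.ext (fun z => Tmap_Smap d z))
    (LinearMap.ext (fun f => Smap_Tmap d f))

lemma cont_T (d : ℕ) : Continuous (TmapL d) := by
  refine (LipschitzWith.of_dist_le_mul (K := 1) ?_).continuous
  intro x y
  rw [dist_eq_norm, dist_eq_norm, ← map_sub]
  push_cast
  have := Tmap_norm_le d (x - y)
  linarith

def cequiv (d : ℕ) : ↥(spanC lindVec d) ≃L[ℝ] Pd d :=
  { lequiv d with
    continuous_toFun := cont_T d
    continuous_invFun := LinearMap.continuous_of_finiteDimensional (SmapL d) }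

lemma cequiv_norm (d : ℕ) :
    ‖((cequiv d) : ↥(spanC lindVec d) →L[ℝ] Pd d)‖ ≤ 1 := by
  refine ContinuousLinearMap.opNorm_le_bound _ zero_le_one ?_
  intro f
  rw [one_mul]
  exact Tmap_norm_le d f

lemma cequiv_symm_norm (d : ℕ) :
    ‖((cequiv d).symm : Pd d →L[ℝ] ↥(spanC lindVec d))‖ ≤ 2 := by
  refine ContinuousLinearMap.opNorm_le_bound _ (by norm_num) ?_
  intro z
  have h1 : ((cequiv d).symm : Pd d →L[ℝ] ↥(spanC lindVec d)) z = SmapL d z := rfl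
  rw [h1]
  have h2 := norm_le_two_Tmap d (SmapL d z)
  rw [Tmap_Smap d z] at h2
  exact h2

end Lind

namespace Lind

lemma fund_val (A : Finset ℕ) : ‖∑ j ∈ A, lindSeq j‖ = ‖∑ j ∈ A, lindVec j‖ := by
  rw [Submodule.coe_norm, Submodule.coe_sum]
  exact congrArg _ (Finset.sum_congr rfl fun j _ => rfl)

lemma fund_ub (A : Finset ℕ) : ‖∑ j ∈ A, lindVec j‖ ≤ 2 * A.card := by
  have h1 : ∑ j ∈ A, lindVec j = ∑ j ∈ A, (fun _ : ℕ => (1:ℝ)) j • lindVec j := by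
    refine Finset.sum_congr rfl ?_
    intro j _
    rw [one_smul]
  rw [h1]
  refine (norm_comb_le _ A).trans ?_
  simp

lemma fund_lb (m : ℕ) : (m:ℝ)/2 ≤ ‖∑ j ∈ Finset.range m, lindVec j‖ := by
  classical
  have h1 : ∑ j ∈ Finset.range m, lindVec j
      = ∑ j ∈ Finset.range m, (fun _ : ℕ => (1:ℝ)) j • lindVec j := by
    refine Finset.sum_congr rfl ?_
    intro j _
    rw [one_smul]
  rw [h1]
  have hcoord := coord_sum (fun _ : ℕ => (1:ℝ)) (Finset.range m)
  have hterm : ∀ n ∈ Finset.range m,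
      (1:ℝ)/2 ≤ |(↑(∑ k ∈ Finset.range m, (fun _ : ℕ => (1:ℝ)) k • lindVec k) : ∀ _ : ℕ, ℝ) n| := by
    intro n hn
    rw [hcoord n, if_pos hn]
    by_cases hc : n ≠ 0 ∧ par n ∈ Finset.range m
    · rw [if_pos hc]
      rw [show (1:ℝ) - 1/2*1 = 1/2 by norm_num, abs_of_nonneg (by norm_num : (0:ℝ) ≤ (1:ℝ)/2)]
    · rw [if_neg hc]
      rw [show (1:ℝ) - 1/2*0 = 1 by norm_num, abs_of_nonneg (by norm_num : (0:ℝ) ≤ (1:ℝ))]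
      norm_num
  calc (m:ℝ)/2 = ∑ _n ∈ Finset.range m, ((1:ℝ)/2) := by
        rw [Finset.sum_const, nsmul_eq_mul]
        simp
        ring
    _ ≤ ∑ n ∈ Finset.range m,
        |(↑(∑ k ∈ Finset.range m, (fun _ : ℕ => (1:ℝ)) k • lindVec k) : ∀ _ : ℕ, ℝ) n| :=
        Finset.sum_le_sum hterm
    _ ≤ ‖∑ k ∈ Finset.range m, (fun _ : ℕ => (1:ℝ)) k • lindVec k‖ := by
        rw [norm1]
        exact Summable.sum_le_tsum _ (fun n _ => abs_nonneg _) (summ _)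

def FSet (m : ℕ) : Set ℝ := {r : ℝ | ∃ A : Finset ℕ, A.card ≤ m ∧ r = ‖∑ j ∈ A, lindSeq j‖}

lemma fundFun_eq (m : ℕ) : fundFun lindSeq m = sSup (FSet m) := rfl

lemma FSet_le {m : ℕ} {r : ℝ} (hr : r ∈ FSet m) : r ≤ 2 * m := by
  obtain ⟨A, hA, rfl⟩ := hr
  rw [fund_val]
  refine (fund_ub A).trans ?_
  have : (A.card : ℝ) ≤ (m : ℝ) := by exact_mod_cast hA
  linarith

lemma fundFun_ub (m : ℕ) : fundFun lindSeq m ≤ 2 * m := by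
  rw [fundFun_eq]
  exact Real.sSup_le (fun r hr => FSet_le hr) (by positivity)

lemma fundFun_lb (m : ℕ) : (m : ℝ) ≤ 2 * fundFun lindSeq m := by
  have hmem : ‖∑ j ∈ Finset.range m, lindSeq j‖ ∈ FSet m :=
    ⟨Finset.range m, by simp, rfl⟩
  have hbdd : BddAbove (FSet m) := ⟨2*m, fun r hr => FSet_le hr⟩
  have h1 : (m:ℝ)/2 ≤ ‖∑ j ∈ Finset.range m, lindSeq j‖ := by
    rw [fund_val]
    exact fund_lb m
  have h2 := le_csSup hbdd hmem
  rw [fundFun_eq]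
  linarith

end Lind

theorem statement_3 :
    AlmostGreedyBasis lindSeq ∧
    (∃ C > 0, ∀ m : ℕ, 2 ≤ m →
      Lconst lindSeq m ≤ C * Real.log m ∧ Real.log m ≤ C * Lconst lindSeq m) ∧
    (∃ C > 0, ∀ d : ℕ, 1 ≤ d →
      ∃ e : ↥(spanC lindVec d) ≃L[ℝ] PiLp 1 (fun _ : Fin d => ℝ),
        ‖(e : ↥(spanC lindVec d) →L[ℝ] PiLp 1 (fun _ : Fin d => ℝ))‖ *
          ‖(e.symm : PiLp 1 (fun _ : Fin d => ℝ) →L[ℝ] ↥(spanC lindVec d))‖ ≤ C) ∧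
    (∃ C > 0, ∀ m : ℕ, 1 ≤ m →
      fundFun lindSeq m ≤ C * m ∧ (m : ℝ) ≤ C * fundFun lindSeq m) := by
  refine ⟨Lind.almostGreedy, ⟨6, by norm_num, ?_⟩, ⟨2, by norm_num, ?_⟩,
    ⟨2, by norm_num, fun m _ => ⟨Lind.fundFun_ub m, Lind.fundFun_lb m⟩⟩⟩
  · -- part (a)
    intro m hm
    have hl2 : (0.6931471803 : ℝ) < Real.log 2 := Real.log_two_gt_d9
    have hl2u : Real.log 2 < 1 := by
      have := Real.log_two_lt_d9
      linarith
    have hl2pos : (0:ℝ) < Real.log 2 := by linarith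
    have hmpos : (0:ℝ) < (m:ℝ) := by exact_mod_cast (by omega : 0 < m)
    have hm2 : Real.log 2 ≤ Real.log m := by
      refine Real.log_le_log (by norm_num) ?_
      exact_mod_cast hm
    have hlogm_pos : (0:ℝ) < Real.log m := by linarith
    constructor
    · -- upper bound
      have hLc := Lind.Lconst_le (m := m) (by omega)
      set L := Nat.log 2 m with hL
      have hpow : (2:ℕ)^L ≤ m := Nat.pow_log_le_self 2 (by omega)
      have hLlog : (L:ℝ) * Real.log 2 ≤ Real.log m := by
        have h1 : Real.log ((2:ℝ)^L) ≤ Real.log m := by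
          refine Real.log_le_log (by positivity) ?_
          exact_mod_cast hpow
        rwa [Real.log_pow] at h1
      have h46 : (4:ℝ) ≤ 6 * Real.log 2 := by nlinarith
      have hstep : (2*(L:ℝ)+2) * Real.log 2 ≤ 6 * Real.log m * Real.log 2 := by
        have t2 : 4 * Real.log m ≤ 6 * Real.log 2 * Real.log m :=
          mul_le_mul_of_nonneg_right h46 hlogm_pos.le
        nlinarith
      have hfin : 2*(L:ℝ)+2 ≤ 6 * Real.log m :=
        le_of_mul_le_mul_right hstep hl2pos
      calc Lconst lindSeq m ≤ 2 * ((L:ℝ) + 1) := hLc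
        _ = 2*(L:ℝ)+2 := by ring
        _ ≤ 6 * Real.log m := hfin
    · -- lower bound
      have hLc := Lind.Lconst_ge (m := m) hm
      set L' := Nat.log 2 (m+1) with hL'
      have hL'1 : 1 ≤ L' := Nat.log_pos (by norm_num) (by omega)
      have hL'r : (1:ℝ) ≤ (L':ℝ) := by exact_mod_cast hL'1
      have hup : Real.log m ≤ ((L':ℝ)+1) * Real.log 2 := by
        have hub : m + 1 < 2^(L'+1) := Nat.lt_pow_succ_log_self (by norm_num) (m+1)
        have h1 : Real.log m ≤ Real.log ((2:ℝ)^(L'+1)) := by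
          refine Real.log_le_log hmpos ?_
          have : ((m:ℝ)) ≤ ((2^(L'+1) : ℕ) : ℝ) := by exact_mod_cast (by omega : m ≤ 2^(L'+1))
          push_cast at this
          exact this
        rwa [Real.log_pow, Nat.cast_add, Nat.cast_one] at h1
      have h2 : ((L':ℝ)+1) * Real.log 2 ≤ (L':ℝ)+1 := by
        refine mul_le_of_le_one_right (by linarith) hl2u.le
      have h3 : (L':ℝ)+1 ≤ 2*(L':ℝ) := by linarith
      have h4 : 2*(L':ℝ) ≤ 3*(L':ℝ) := by linarith
      have h5 : 3*(L':ℝ) ≤ 6 * Lconst lindSeq m := by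
        have := hLc
        linarith
      linarith
  · -- part (b)
    intro d _
    refine ⟨Lind.cequiv d, ?_⟩
    have h1 := Lind.cequiv_norm d
    have h2 := Lind.cequiv_symm_norm d
    have hn1 : (0:ℝ) ≤ ‖((Lind.cequiv d) : ↥(spanC lindVec d) →L[ℝ] Lind.Pd d)‖ := ContinuousLinearMap.opNorm_nonneg _
    have hn2 : (0:ℝ) ≤ ‖((Lind.cequiv d).symm : Lind.Pd d →L[ℝ] ↥(spanC lindVec d))‖ := ContinuousLinearMap.opNorm_nonneg _
    nlinarith
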